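/- arXiv:2402.09591 — 12 statements merged into one kernel-verified Lean document; each statement's English description precedes it below -/
import Mathlib

section
/- If p is Lipschitz continuous with Lipschitz constant L_p, then for all x, x', y ∈ ℝ^N one has |K(x,y) − K(x',y)| ≤ L_p·‖x − x'‖·√(K(y,y)). -/
open MeasureTheory

/-- The common-neighbor kernel `K(x,y) = ∫ p(‖x−z‖)·p(‖y−z‖) dμ(z)`. -/
noncomputable def commonK {N : ℕ} (μ : Measure (EuclideanSpace ℝ (Fin N)))
    (p : ℝ → ℝ) (x y : EuclideanSpace ℝ (Fin N)) : ℝ :=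
  ∫ z, p ‖x - z‖ * p ‖y - z‖ ∂μ

/-!
Writing `g_w(z) = p ‖w - z‖`, the difference `K(x,y) - K(x',y)` is the integral of
`(g_x - g_x') g_y`. Lipschitz continuity of `p` and the reverse triangle inequality bound
`|g_x - g_x'|` by `L_p ‖x - x'‖`, so the difference is at most `L_p ‖x - x'‖ ∫ g_y`, and
`∫ g_y ≤ √(∫ g_y²) = √(K(y,y))` because a variance is nonnegative.
-/

open ProbabilityTheory

theorem integral_le_sqrt_integral_sq {Ω : Type*} [MeasurableSpace Ω] {μ : Measure Ω}
    [IsProbabilityMeasure μ] {f : Ω → ℝ} (hf : MemLp f 2 μ) :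
    ∫ ω, f ω ∂μ ≤ √(∫ ω, f ω ^ 2 ∂μ) := by
  have hvar := variance_nonneg f μ
  rw [variance_eq_sub hf, sub_nonneg] at hvar
  exact (le_abs_self _).trans (Real.abs_le_sqrt hvar)

theorem nonneg_of_abs_sub_le_mul_abs_sub {p : ℝ → ℝ} {Lp : ℝ}
    (hLip : ∀ a b : ℝ, 0 ≤ a → 0 ≤ b → |p a - p b| ≤ Lp * |a - b|) : 0 ≤ Lp := by
  simpa using (abs_nonneg _).trans (hLip 1 0 zero_le_one le_rfl)

section NormComp

variable {E : Type*} [SeminormedAddCommGroup E] {p : ℝ → ℝ}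

theorem abs_comp_norm_sub_sub_comp_norm_sub_le {Lp : ℝ}
    (hLip : ∀ a b : ℝ, 0 ≤ a → 0 ≤ b → |p a - p b| ≤ Lp * |a - b|) (x x' z : E) :
    |p ‖x - z‖ - p ‖x' - z‖| ≤ Lp * ‖x - x'‖ :=
  calc |p ‖x - z‖ - p ‖x' - z‖| ≤ Lp * |‖x - z‖ - ‖x' - z‖| :=
        hLip _ _ (norm_nonneg _) (norm_nonneg _)
    _ ≤ Lp * ‖x - x'‖ := by
        refine mul_le_mul_of_nonneg_left ?_ (nonneg_of_abs_sub_le_mul_abs_sub hLip)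
        simpa using abs_norm_sub_norm_le (x - z) (x' - z)

theorem norm_comp_norm_sub_le_one (hp0 : ∀ t : ℝ, 0 ≤ t → 0 ≤ p t)
    (hp1 : ∀ t : ℝ, 0 ≤ t → p t ≤ 1) (w z : E) : ‖p ‖w - z‖‖ ≤ 1 := by
  rw [Real.norm_of_nonneg (hp0 _ (norm_nonneg _))]
  exact hp1 _ (norm_nonneg _)

variable [MeasurableSpace E] [OpensMeasurableSpace E]

theorem measurable_comp_norm_sub (hpmeas : Measurable p) (w : E) :
    Measurable fun z => p ‖w - z‖ :=
  hpmeas.comp (continuous_const.sub continuous_id).norm.measurable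

theorem memLp_comp_norm_sub {μ : Measure E} [IsFiniteMeasure μ] (hpmeas : Measurable p)
    (hp0 : ∀ t : ℝ, 0 ≤ t → 0 ≤ p t) (hp1 : ∀ t : ℝ, 0 ≤ t → p t ≤ 1) (w : E)
    (q : ENNReal) : MemLp (fun z => p ‖w - z‖) q μ :=
  .of_bound (measurable_comp_norm_sub hpmeas w).aestronglyMeasurable 1
    (.of_forall (norm_comp_norm_sub_le_one hp0 hp1 w))

end NormComp

section CommonK

variable {N : ℕ} {μ : Measure (EuclideanSpace ℝ (Fin N))} {p : ℝ → ℝ}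

theorem integrable_commonK_integrand [IsFiniteMeasure μ] (hpmeas : Measurable p)
    (hp0 : ∀ t : ℝ, 0 ≤ t → 0 ≤ p t) (hp1 : ∀ t : ℝ, 0 ≤ t → p t ≤ 1)
    (x y : EuclideanSpace ℝ (Fin N)) :
    Integrable (fun z => p ‖x - z‖ * p ‖y - z‖) μ :=
  (memLp_one_iff_integrable.mp (memLp_comp_norm_sub hpmeas hp0 hp1 y 1)).bdd_mul
    (measurable_comp_norm_sub hpmeas x).aestronglyMeasurable
    (.of_forall (norm_comp_norm_sub_le_one hp0 hp1 x))

theorem commonK_sub_commonK [IsFiniteMeasure μ] (hpmeas : Measurable p)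
    (hp0 : ∀ t : ℝ, 0 ≤ t → 0 ≤ p t) (hp1 : ∀ t : ℝ, 0 ≤ t → p t ≤ 1)
    (x x' y : EuclideanSpace ℝ (Fin N)) :
    commonK μ p x y - commonK μ p x' y =
      ∫ z, (p ‖x - z‖ - p ‖x' - z‖) * p ‖y - z‖ ∂μ := by
  rw [commonK, commonK, ← integral_sub (integrable_commonK_integrand hpmeas hp0 hp1 x y)
    (integrable_commonK_integrand hpmeas hp0 hp1 x' y)]
  simp_rw [sub_mul]

theorem abs_commonK_sub_commonK_le_mul_integral [IsFiniteMeasure μ] (hpmeas : Measurable p)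
    (hp0 : ∀ t : ℝ, 0 ≤ t → 0 ≤ p t) (hp1 : ∀ t : ℝ, 0 ≤ t → p t ≤ 1) {Lp : ℝ}
    (hLip : ∀ a b : ℝ, 0 ≤ a → 0 ≤ b → |p a - p b| ≤ Lp * |a - b|)
    (x x' y : EuclideanSpace ℝ (Fin N)) :
    |commonK μ p x y - commonK μ p x' y| ≤ Lp * ‖x - x'‖ * ∫ z, p ‖y - z‖ ∂μ := by
  rw [commonK_sub_commonK hpmeas hp0 hp1, ← integral_const_mul, ← Real.norm_eq_abs]
  have hy : Integrable (fun z => p ‖y - z‖) μ :=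
    (memLp_comp_norm_sub hpmeas hp0 hp1 y 1).integrable le_rfl
  refine norm_integral_le_of_norm_le (hy.const_mul _) (.of_forall fun z => ?_)
  rw [Real.norm_eq_abs, abs_mul, abs_of_nonneg (hp0 _ (norm_nonneg _))]
  exact mul_le_mul_of_nonneg_right (abs_comp_norm_sub_sub_comp_norm_sub_le hLip x x' z)
    (hp0 _ (norm_nonneg _))

theorem integral_comp_norm_sub_le_sqrt_commonK_self [IsProbabilityMeasure μ]
    (hpmeas : Measurable p) (hp0 : ∀ t : ℝ, 0 ≤ t → 0 ≤ p t)
    (hp1 : ∀ t : ℝ, 0 ≤ t → p t ≤ 1) (y : EuclideanSpace ℝ (Fin N)) :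
    ∫ z, p ‖y - z‖ ∂μ ≤ √(commonK μ p y y) := by
  simpa only [commonK, sq] using
    integral_le_sqrt_integral_sq (memLp_comp_norm_sub hpmeas hp0 hp1 y 2 (μ := μ))

end CommonK

theorem abs_commonK_sub_commonK_le_general {N : ℕ}
    (μ : Measure (EuclideanSpace ℝ (Fin N))) [IsProbabilityMeasure μ]
    (p : ℝ → ℝ) (hpmeas : Measurable p)
    (hp0 : ∀ t : ℝ, 0 ≤ t → 0 ≤ p t) (hp1 : ∀ t : ℝ, 0 ≤ t → p t ≤ 1)
    (Lp : ℝ) (hLip : ∀ a b : ℝ, 0 ≤ a → 0 ≤ b → |p a - p b| ≤ Lp * |a - b|)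
    (x x' y : EuclideanSpace ℝ (Fin N)) :
    |commonK μ p x y - commonK μ p x' y| ≤
      Lp * ‖x - x'‖ * Real.sqrt (commonK μ p y y) := by
  have hLp : 0 ≤ Lp := nonneg_of_abs_sub_le_mul_abs_sub hLip
  calc |commonK μ p x y - commonK μ p x' y| ≤ Lp * ‖x - x'‖ * ∫ z, p ‖y - z‖ ∂μ :=
        abs_commonK_sub_commonK_le_mul_integral hpmeas hp0 hp1 hLip x x' y
    _ ≤ Lp * ‖x - x'‖ * √(commonK μ p y y) := by
        gcongr
        exact integral_comp_norm_sub_le_sqrt_commonK_self hpmeas hp0 hp1 y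

/-- if `p` is Lipschitz with constant `L_p`, then
`|K(x,y) − K(x',y)| ≤ L_p · ‖x − x'‖ · √(K(y,y))`. -/
theorem abs_commonK_sub_commonK_le {N : ℕ} (hN : 0 < N)
    (μ : Measure (EuclideanSpace ℝ (Fin N))) [IsProbabilityMeasure μ]
    (p : ℝ → ℝ) (hpmeas : Measurable p)
    (hp0 : ∀ t : ℝ, 0 ≤ t → 0 ≤ p t) (hp1 : ∀ t : ℝ, 0 ≤ t → p t ≤ 1)
    (Lp : ℝ) (hLip : ∀ a b : ℝ, 0 ≤ a → 0 ≤ b → |p a - p b| ≤ Lp * |a - b|)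
    (x x' y : EuclideanSpace ℝ (Fin N)) :
    |commonK μ p x y - commonK μ p x' y| ≤
      Lp * ‖x - x'‖ * Real.sqrt (commonK μ p y y) :=
  abs_commonK_sub_commonK_le_general μ p hpmeas hp0 hp1 Lp hLip x x' y
end

section
/- If in addition p is continuous and M ⊆ ℝ^N is a nonempty compact set, then there exists x₀ ∈ M such that K(x,y) ≤ K(x₀,x₀) for all x, y ∈ M; that is, the maximum of K over M × M is attained at a diagonal point. -/
open MeasureTheory

/-- if `p` is moreover continuous and `M` is a nonempty compact subset of
`ℝ^N`, then the maximum of `K` over `M × M` is attained at a diagonal point: there is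
`x₀ ∈ M` with `K(x,y) ≤ K(x₀,x₀)` for all `x, y ∈ M`. -/
theorem exists_diag_max_commonK {N : ℕ} (hN : 0 < N)
    (μ : Measure (EuclideanSpace ℝ (Fin N))) [IsProbabilityMeasure μ]
    (p : ℝ → ℝ) (hpmeas : Measurable p)
    (hp0 : ∀ t : ℝ, 0 ≤ t → 0 ≤ p t) (hp1 : ∀ t : ℝ, 0 ≤ t → p t ≤ 1)
    (hpcont : ContinuousOn p (Set.Ici 0))
    (M : Set (EuclideanSpace ℝ (Fin N))) (hMcp : IsCompact M) (hMne : M.Nonempty) :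
    ∃ x₀ ∈ M, ∀ x ∈ M, ∀ y ∈ M, commonK μ p x y ≤ commonK μ p x₀ x₀ := by
  have hmeas : ∀ x y : EuclideanSpace ℝ (Fin N),
      Measurable (fun z => p ‖x - z‖ * p ‖y - z‖) := fun x y =>
    (hpmeas.comp ((measurable_const.sub measurable_id).norm)).mul
      (hpmeas.comp ((measurable_const.sub measurable_id).norm))
  have hbd : ∀ x y z : EuclideanSpace ℝ (Fin N), ‖p ‖x - z‖ * p ‖y - z‖‖ ≤ 1 := by
    intro x y z
    rw [Real.norm_eq_abs, abs_mul, abs_of_nonneg (hp0 _ (norm_nonneg _)),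
      abs_of_nonneg (hp0 _ (norm_nonneg _))]
    calc p ‖x - z‖ * p ‖y - z‖ ≤ 1 * 1 :=
          mul_le_mul (hp1 _ (norm_nonneg _)) (hp1 _ (norm_nonneg _))
            (hp0 _ (norm_nonneg _)) zero_le_one
      _ = 1 := by ring
  have hint : ∀ x y : EuclideanSpace ℝ (Fin N),
      Integrable (fun z => p ‖x - z‖ * p ‖y - z‖) μ := fun x y =>
    (integrable_const (1 : ℝ)).mono' (hmeas x y).aestronglyMeasurable
      (Filter.Eventually.of_forall (hbd x y))
  have hcontK : Continuous (fun x => commonK μ p x x) := by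
    apply continuous_of_dominated (bound := fun _ => (1 : ℝ))
    · intro x; exact (hmeas x x).aestronglyMeasurable
    · intro x; exact Filter.Eventually.of_forall (hbd x x)
    · exact integrable_const 1
    · refine Filter.Eventually.of_forall (fun z => ?_)
      have hc : Continuous fun x : EuclideanSpace ℝ (Fin N) => p ‖x - z‖ :=
        hpcont.comp_continuous (continuous_id.sub continuous_const).norm
          (fun x => Set.mem_Ici.mpr (norm_nonneg _))
      exact hc.mul hc
  obtain ⟨x₀, hx₀M, hmax⟩ := hMcp.exists_isMaxOn hMne hcontK.continuousOn
  refine ⟨x₀, hx₀M, fun x hx y hy => ?_⟩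
  have h1 : commonK μ p x y ≤ (commonK μ p x x + commonK μ p y y) / 2 := by
    have hle : ∀ z : EuclideanSpace ℝ (Fin N),
        p ‖x - z‖ * p ‖y - z‖ ≤
          (p ‖x - z‖ * p ‖x - z‖ + p ‖y - z‖ * p ‖y - z‖) / 2 := by
      intro z
      nlinarith [sq_nonneg (p ‖x - z‖ - p ‖y - z‖)]
    have := integral_mono (hint x y) (((hint x x).add (hint y y)).div_const 2) hle
    calc commonK μ p x y
        ≤ ∫ z, (p ‖x - z‖ * p ‖x - z‖ + p ‖y - z‖ * p ‖y - z‖) / 2 ∂μ := this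
      _ = (commonK μ p x x + commonK μ p y y) / 2 := by
          rw [integral_div, integral_add (hint x x) (hint y y)]; rfl
  have h2 := hmax hx
  have h3 := hmax hy
  simp only [Set.mem_setOf_eq] at h2 h3
  linarith
end

section
/- Suppose p is non-increasing and there are constants ℓ_p > 0 and R > 0 with p(a) − p(b) ≥ ℓ_p·(b − a) for all 0 ≤ a ≤ b ≤ R. Let x, y, z₀ ∈ ℝ^N, ρ > 0, c > 0, and m ≥ 0 be such that μ(B(z₀,ρ)) ≥ m, where B(z₀,ρ) is the open Euclidean ball, and such that for μ-almost every z ∈ B(z₀,ρ) one has |‖x−z‖ − ‖y−z‖| ≥ c and min(‖x−z‖, ‖y−z‖) + c ≤ R. Then ∫_{ℝ^N} (p(‖x−z‖) − p(‖y−z‖))² dμ(z) ≥ m·ℓ_p²·c², and consequently K(x,y) ≤ (K(x,x) + K(y,y))/2 − m·ℓ_p²·c²/2. -/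
open MeasureTheory

/-!
Expanding the square gives `∫ (p(‖x−z‖) − p(‖y−z‖))² dμ = K(x,x) + K(y,y) − 2 K(x,y)`,
so the kernel inequality is the lower bound on the integral. On the ball, the smaller of
the two distances, say `u`, satisfies `u + c ≤ R` and the larger one is at least `u + c`;
monotonicity and the decay rate of `p` on `[u, u + c] ⊆ [0, R]` give
`|p(‖x−z‖) − p(‖y−z‖)| ≥ ℓ_p c` there, and integrating this over a set of mass at least `m`
gives `m ℓ_p² c²`.
-/

section Integral

variable {α : Type*} [MeasurableSpace α] {μ : Measure α}

theorem integral_sub_sq_eq {F G : α → ℝ} (hF : MemLp F 2 μ) (hG : MemLp G 2 μ) :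
    ∫ z, (F z - G z) ^ 2 ∂μ =
      ∫ z, F z * F z ∂μ + ∫ z, G z * G z ∂μ - 2 * ∫ z, F z * G z ∂μ := by
  have hFF : Integrable (fun z => F z * F z) μ := hF.integrable_mul hF
  have hGG : Integrable (fun z => G z * G z) μ := hG.integrable_mul hG
  have hFG : Integrable (fun z => F z * G z) μ := hF.integrable_mul hG
  have hsum : Integrable (fun z => F z * F z + G z * G z) μ := hFF.add hGG
  rw [← integral_add hFF hGG, ← integral_const_mul, ← integral_sub hsum (hFG.const_mul 2)]
  congr 1 with z
  ring

theorem mul_le_integral_of_ae_le_on {f : α → ℝ} {s : Set α} {m C : ℝ} (hs : MeasurableSet s)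
    (hμs : μ s ≠ ⊤) (hm : ENNReal.ofReal m ≤ μ s) (hC : 0 ≤ C) (hf0 : 0 ≤ᵐ[μ] f)
    (hCf : ∀ᵐ z ∂μ, z ∈ s → C ≤ f z) (hf : Integrable f μ) :
    m * C ≤ ∫ z, f z ∂μ :=
  calc m * C ≤ μ.real s * C :=
        mul_le_mul_of_nonneg_right ((ENNReal.ofReal_le_iff_le_toReal hμs).1 hm) hC
    _ = ∫ _ in s, C ∂μ := by rw [setIntegral_const, smul_eq_mul]
    _ ≤ ∫ z in s, f z ∂μ :=
        setIntegral_mono_on_ae (integrableOn_const hμs) hf.integrableOn hs hCf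
    _ ≤ ∫ z, f z ∂μ := setIntegral_le_integral hf hf0

end Integral

theorem mul_le_abs_sub_of_separated {p : ℝ → ℝ} {ℓ R c a b : ℝ}
    (hmono : AntitoneOn p (Set.Ici 0))
    (hlow : ∀ a b : ℝ, 0 ≤ a → a ≤ b → b ≤ R → ℓ * (b - a) ≤ p a - p b)
    (hc : 0 ≤ c) (ha : 0 ≤ a) (hb : 0 ≤ b) (hsep : c ≤ |a - b|) (hR : min a b + c ≤ R) :
    ℓ * c ≤ |p a - p b| := by
  wlog hab : a ≤ b generalizing a b
  · rw [abs_sub_comm]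
    exact this hb ha (by rwa [abs_sub_comm]) (by rwa [min_comm]) (le_of_not_ge hab)
  rw [abs_of_nonpos (sub_nonpos.2 hab), neg_sub] at hsep
  rw [min_eq_left hab] at hR
  have hrate : ℓ * c ≤ p a - p (a + c) := by simpa using hlow a (a + c) ha (by linarith) hR
  have hdecr : p b ≤ p (a + c) :=
    hmono (Set.mem_Ici.2 (by linarith)) (Set.mem_Ici.2 hb) (by linarith)
  linarith [le_abs_self (p a - p b)]

section CommonK

variable {N : ℕ} {μ : Measure (EuclideanSpace ℝ (Fin N))} {p : ℝ → ℝ}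

theorem memLp_comp_norm_sub_s5 [IsFiniteMeasure μ] (hp : Measurable p) {C : ℝ}
    (hbdd : ∀ t, 0 ≤ t → |p t| ≤ C) (x : EuclideanSpace ℝ (Fin N)) (q : ENNReal) :
    MemLp (fun z => p ‖x - z‖) q μ :=
  MemLp.of_bound (hp.comp (measurable_const.sub measurable_id).norm).aestronglyMeasurable C
    (ae_of_all _ fun _ => hbdd _ (norm_nonneg _))

theorem integral_sub_sq_eq_commonK [IsFiniteMeasure μ] (hp : Measurable p) {C : ℝ}
    (hbdd : ∀ t, 0 ≤ t → |p t| ≤ C) (x y : EuclideanSpace ℝ (Fin N)) :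
    ∫ z, (p ‖x - z‖ - p ‖y - z‖) ^ 2 ∂μ =
      commonK μ p x x + commonK μ p y y - 2 * commonK μ p x y :=
  integral_sub_sq_eq (memLp_comp_norm_sub_s5 hp hbdd x 2) (memLp_comp_norm_sub_s5 hp hbdd y 2)

end CommonK

theorem commonK_le_of_separated_ball_general {N : ℕ}
    (μ : Measure (EuclideanSpace ℝ (Fin N))) [IsProbabilityMeasure μ]
    (p : ℝ → ℝ) (hpmeas : Measurable p)
    (hp0 : ∀ t : ℝ, 0 ≤ t → 0 ≤ p t) (hp1 : ∀ t : ℝ, 0 ≤ t → p t ≤ 1)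
    (hmono : ∀ a b : ℝ, 0 ≤ a → a ≤ b → p b ≤ p a)
    (ℓp R : ℝ) (hℓp : 0 < ℓp)
    (hlow : ∀ a b : ℝ, 0 ≤ a → a ≤ b → b ≤ R → ℓp * (b - a) ≤ p a - p b)
    (x y z₀ : EuclideanSpace ℝ (Fin N)) (ρ c m : ℝ)
    (hc : 0 < c)
    (hball : ENNReal.ofReal m ≤ μ (Metric.ball z₀ ρ))
    (hsep : ∀ᵐ z ∂μ, z ∈ Metric.ball z₀ ρ →
      c ≤ |‖x - z‖ - ‖y - z‖| ∧ min ‖x - z‖ ‖y - z‖ + c ≤ R) :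
    m * ℓp ^ 2 * c ^ 2 ≤ ∫ z, (p ‖x - z‖ - p ‖y - z‖) ^ 2 ∂μ ∧
      commonK μ p x y ≤
        (commonK μ p x x + commonK μ p y y) / 2 - m * ℓp ^ 2 * c ^ 2 / 2 := by
  have hbdd : ∀ t, 0 ≤ t → |p t| ≤ 1 := fun t ht =>
    abs_le.2 ⟨by linarith [hp0 t ht], hp1 t ht⟩
  have hantitone : AntitoneOn p (Set.Ici 0) := fun a ha _ _ hab => hmono a _ ha hab
  have hgap : ∀ᵐ z ∂μ, z ∈ Metric.ball z₀ ρ →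
      (ℓp * c) ^ 2 ≤ (p ‖x - z‖ - p ‖y - z‖) ^ 2 := by
    filter_upwards [hsep] with z hz hzball
    obtain ⟨hdist, hR⟩ := hz hzball
    rw [← sq_abs (p _ - p _)]
    exact pow_le_pow_left₀ (by positivity) (mul_le_abs_sub_of_separated hantitone hlow hc.le
      (norm_nonneg _) (norm_nonneg _) hdist hR) 2
  have hsq : m * ℓp ^ 2 * c ^ 2 ≤ ∫ z, (p ‖x - z‖ - p ‖y - z‖) ^ 2 ∂μ := by
    rw [mul_assoc, ← mul_pow]
    have hF := memLp_comp_norm_sub_s5 (μ := μ) hpmeas hbdd x 2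
    have hG := memLp_comp_norm_sub_s5 (μ := μ) hpmeas hbdd y 2
    exact mul_le_integral_of_ae_le_on Metric.isOpen_ball.measurableSet (measure_ne_top _ _) hball
      (sq_nonneg _) (ae_of_all _ fun _ => sq_nonneg _) hgap (hF.sub hG).integrable_sq
  refine ⟨hsq, ?_⟩
  rw [integral_sub_sq_eq_commonK hpmeas hbdd] at hsq
  linarith

/-- if `p` is non-increasing, decreases at rate at least `ℓ_p` on `[0,R]`,
and `μ(B(z₀,ρ)) ≥ m` where for `μ`-a.e. `z ∈ B(z₀,ρ)` the distances `‖x−z‖, ‖y−z‖` differ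
by at least `c` and `min(‖x−z‖,‖y−z‖) + c ≤ R`, then
`∫ (p(‖x−z‖) − p(‖y−z‖))² dμ ≥ m·ℓ_p²·c²` and consequently
`K(x,y) ≤ (K(x,x)+K(y,y))/2 − m·ℓ_p²·c²/2`. -/
theorem commonK_le_of_separated_ball {N : ℕ} (hN : 0 < N)
    (μ : Measure (EuclideanSpace ℝ (Fin N))) [IsProbabilityMeasure μ]
    (p : ℝ → ℝ) (hpmeas : Measurable p)
    (hp0 : ∀ t : ℝ, 0 ≤ t → 0 ≤ p t) (hp1 : ∀ t : ℝ, 0 ≤ t → p t ≤ 1)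
    (hmono : ∀ a b : ℝ, 0 ≤ a → a ≤ b → p b ≤ p a)
    (ℓp R : ℝ) (hℓp : 0 < ℓp) (hR : 0 < R)
    (hlow : ∀ a b : ℝ, 0 ≤ a → a ≤ b → b ≤ R → ℓp * (b - a) ≤ p a - p b)
    (x y z₀ : EuclideanSpace ℝ (Fin N)) (ρ c m : ℝ)
    (hρ : 0 < ρ) (hc : 0 < c) (hm : 0 ≤ m)
    (hball : ENNReal.ofReal m ≤ μ (Metric.ball z₀ ρ))
    (hsep : ∀ᵐ z ∂μ, z ∈ Metric.ball z₀ ρ →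
      c ≤ |‖x - z‖ - ‖y - z‖| ∧ min ‖x - z‖ ‖y - z‖ + c ≤ R) :
    m * ℓp ^ 2 * c ^ 2 ≤ ∫ z, (p ‖x - z‖ - p ‖y - z‖) ^ 2 ∂μ ∧
      commonK μ p x y ≤
        (commonK μ p x x + commonK μ p y y) / 2 - m * ℓp ^ 2 * c ^ 2 / 2 :=
  commonK_le_of_separated_ball_general μ p hpmeas hp0 hp1 hmono ℓp R hℓp hlow x y z₀ ρ c m hc hball
    hsep
end

section
/- Let x₀, x, q ∈ ℝ^N, let r > 0 and η > 0 with η ≤ 0.1·r, let σ ∈ {−1, +1}, let u ∈ ℝ^N with ‖u‖ = 1, and let τ ∈ ℝ. Assume ‖x − x₀‖ < η, 0.9·r ≤ ‖q − x₀‖ ≤ 2·r, ⟨u, σ·(q − x₀)⟩ = τ·‖q − x₀‖, and 16·η/r ≤ τ ≤ 1. Then q ≠ x and τ/2 ≤ ⟨u, σ·(q − x)⟩/‖q − x‖ ≤ 3·τ/2. -/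
/-!
Write `σ • (q - x) = p + w` with `p = σ • (q - x₀)` and `w = σ • (x₀ - x)`, so `‖w‖ < η`.
Moving from `p` to `p + w` changes both `⟪u, ·⟫` and `‖·‖` by at most `‖w‖`, while
`τ ‖p‖ ≥ 0.9 τ r ≥ 14.4 η` dominates that error; so the ratio moves by at most a factor
between `1/2` and `3/2`.
-/

open RealInnerProductSpace

section Perturbation

variable {E : Type*} [NormedAddCommGroup E] [InnerProductSpace ℝ E]

theorem abs_inner_add_sub_le {u p w : E} {τ : ℝ} (hu : ‖u‖ ≤ 1) (hp : ⟪u, p⟫ = τ * ‖p‖) :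
    |⟪u, p + w⟫ - τ * ‖p‖| ≤ ‖w‖ := by
  rw [inner_add_right, hp, add_sub_cancel_left]
  calc |⟪u, w⟫| ≤ ‖u‖ * ‖w‖ := abs_real_inner_le_norm u w
    _ ≤ ‖w‖ := mul_le_of_le_one_left (norm_nonneg w) hu

/-- The constant `5` is what the upper bound `3τ/2` needs when `τ ≤ 1`. -/
theorem inner_add_div_norm_add_mem_Icc {u p w : E} {τ ε : ℝ} (hu : ‖u‖ ≤ 1)
    (hp : ⟪u, p⟫ = τ * ‖p‖) (hw : ‖w‖ < ε) (hτ : τ ≤ 1) (hε : 5 * ε ≤ τ * ‖p‖) :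
    p + w ≠ 0 ∧ ⟪u, p + w⟫ / ‖p + w‖ ∈ Set.Icc (τ / 2) (3 * τ / 2) := by
  have hinner := abs_le.mp (abs_inner_add_sub_le (w := w) hu hp)
  have hnorm := abs_le.mp (abs_norm_sub_norm_le (p + w) p)
  rw [add_sub_cancel_left] at hnorm
  have hτ_nonneg : 0 ≤ τ := by
    by_contra! h
    nlinarith [norm_nonneg p, norm_nonneg w]
  have hp_large : 5 * ε ≤ ‖p‖ := hε.trans (mul_le_of_le_one_left (norm_nonneg p) hτ)
  have hpos : 0 < ‖p + w‖ := by nlinarith [norm_nonneg w]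
  refine ⟨norm_pos_iff.mp hpos, ?_, ?_⟩
  · rw [le_div_iff₀ hpos]; nlinarith
  · rw [div_le_iff₀ hpos]; nlinarith

end Perturbation

theorem inner_direction_stable_general {N : ℕ}
    (x₀ x q : EuclideanSpace ℝ (Fin N)) (r η : ℝ)
    (hr : 0 < r)
    (σ : ℝ) (hσ : σ = 1 ∨ σ = -1)
    (u : EuclideanSpace ℝ (Fin N)) (hu : ‖u‖ = 1) (τ : ℝ)
    (hx : ‖x - x₀‖ < η)
    (hq1 : 0.9 * r ≤ ‖q - x₀‖)
    (hinner : (inner ℝ u (σ • (q - x₀)) : ℝ) = τ * ‖q - x₀‖)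
    (hτ1 : 16 * η / r ≤ τ) (hτ2 : τ ≤ 1) :
    q ≠ x ∧ τ / 2 ≤ (inner ℝ u (σ • (q - x)) : ℝ) / ‖q - x‖ ∧
      (inner ℝ u (σ • (q - x)) : ℝ) / ‖q - x‖ ≤ 3 * τ / 2 := by
  have hσ_norm : ‖σ‖ = 1 := by rcases hσ with rfl | rfl <;> simp
  have hsplit : σ • (q - x) = σ • (q - x₀) + σ • (x₀ - x) := by
    rw [← smul_add, sub_add_sub_cancel]
  have hp : ‖σ • (q - x₀)‖ = ‖q - x₀‖ := by rw [norm_smul, hσ_norm, one_mul]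
  have hw : ‖σ • (x₀ - x)‖ < η := by rwa [norm_smul, hσ_norm, one_mul, norm_sub_rev]
  have hτr : 16 * η ≤ τ * r := (div_le_iff₀ hr).mp hτ1
  have hτ_nonneg : 0 ≤ τ := by nlinarith [norm_nonneg (x - x₀)]
  have hε : 5 * η ≤ τ * ‖σ • (q - x₀)‖ := by rw [hp]; nlinarith
  obtain ⟨hne, hlow, hup⟩ := inner_add_div_norm_add_mem_Icc hu.le (hp ▸ hinner) hw hτ2 hε
  rw [← hsplit, norm_smul, hσ_norm, one_mul] at hlow hup
  refine ⟨fun h => hne ?_, hlow, hup⟩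
  rw [← hsplit, h, sub_self, smul_zero]

/-- if `‖x − x₀‖ < η ≤ 0.1·r`, `0.9·r ≤ ‖q − x₀‖ ≤ 2·r`, `σ = ±1`,
`⟨u, σ·(q − x₀)⟩ = τ·‖q − x₀‖` with `16·η/r ≤ τ ≤ 1` and `‖u‖ = 1`, then `q ≠ x` and
`τ/2 ≤ ⟨u, σ·(q − x)⟩/‖q − x‖ ≤ 3·τ/2`. -/
theorem inner_direction_stable {N : ℕ} (hN : 0 < N)
    (x₀ x q : EuclideanSpace ℝ (Fin N)) (r η : ℝ)
    (hr : 0 < r) (hη : 0 < η) (hηr : η ≤ 0.1 * r)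
    (σ : ℝ) (hσ : σ = 1 ∨ σ = -1)
    (u : EuclideanSpace ℝ (Fin N)) (hu : ‖u‖ = 1) (τ : ℝ)
    (hx : ‖x - x₀‖ < η)
    (hq1 : 0.9 * r ≤ ‖q - x₀‖) (hq2 : ‖q - x₀‖ ≤ 2 * r)
    (hinner : (inner ℝ u (σ • (q - x₀)) : ℝ) = τ * ‖q - x₀‖)
    (hτ1 : 16 * η / r ≤ τ) (hτ2 : τ ≤ 1) :
    q ≠ x ∧ τ / 2 ≤ (inner ℝ u (σ • (q - x)) : ℝ) / ‖q - x‖ ∧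
      (inner ℝ u (σ • (q - x)) : ℝ) / ‖q - x‖ ≤ 3 * τ / 2 :=
  inner_direction_stable_general x₀ x q r η hr σ hσ u hu τ hx hq1 hinner hτ1 hτ2
end

section
/- Let x₀, x, q ∈ ℝ^N, let r > 0 and η > 0 with η ≤ 0.1·r, let u ∈ ℝ^N with ‖u‖ = 1, and let τ ∈ ℝ. Assume ‖x − x₀‖ < η, 0.9·r ≤ ‖q − x₀‖ ≤ 2·r, ⟨u, q − x₀⟩ = τ·‖q − x₀‖, and 16·η/r ≤ τ ≤ 1. Then for every real t with 0 ≤ t < 0.1·τ·r one has ‖q − x‖ + 0.5·τ·t ≤ ‖q + t·u − x‖ ≤ ‖q − x‖ + 1.7·τ·t. -/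
set_option maxHeartbeats 1000000 in
/-- under the same geometric hypotheses (with `σ = +1`), for every
`0 ≤ t < 0.1·τ·r` one has
`‖q − x‖ + 0.5·τ·t ≤ ‖q + t·u − x‖ ≤ ‖q − x‖ + 1.7·τ·t`. -/
theorem norm_add_smul_bounds {N : ℕ} (hN : 0 < N)
    (x₀ x q : EuclideanSpace ℝ (Fin N)) (r η : ℝ)
    (hr : 0 < r) (hη : 0 < η) (hηr : η ≤ 0.1 * r)
    (u : EuclideanSpace ℝ (Fin N)) (hu : ‖u‖ = 1) (τ : ℝ)
    (hx : ‖x - x₀‖ < η)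
    (hq1 : 0.9 * r ≤ ‖q - x₀‖) (hq2 : ‖q - x₀‖ ≤ 2 * r)
    (hinner : (inner ℝ u (q - x₀) : ℝ) = τ * ‖q - x₀‖)
    (hτ1 : 16 * η / r ≤ τ) (hτ2 : τ ≤ 1) :
    ∀ t : ℝ, 0 ≤ t → t < 0.1 * τ * r →
      ‖q - x‖ + 0.5 * τ * t ≤ ‖q + t • u - x‖ ∧
        ‖q + t • u - x‖ ≤ ‖q - x‖ + 1.7 * τ * t := by
  intro t ht0 ht1
  have hτpos : 0 < τ := lt_of_lt_of_le (by positivity) hτ1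
  have hητ : η ≤ τ * r / 16 := by
    rw [div_le_iff₀ hr] at hτ1; nlinarith
  obtain ⟨a, ha⟩ : ∃ a : ℝ, a = ‖q - x‖ := ⟨_, rfl⟩
  obtain ⟨b, hb⟩ : ∃ b : ℝ, b = (inner ℝ (q - x) u : ℝ) := ⟨_, rfl⟩
  rw [← ha]
  -- inner bound
  have hsplit : q - x = (q - x₀) + (x₀ - x) := by abel
  have hc : |(inner ℝ u (x₀ - x) : ℝ)| ≤ η := by
    have h1 := abs_real_inner_le_norm u (x₀ - x)
    have h2 : ‖x₀ - x‖ = ‖x - x₀‖ := norm_sub_rev _ _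
    rw [hu, h2] at h1
    linarith
  have hbeq : b = τ * ‖q - x₀‖ + inner ℝ u (x₀ - x) := by
    rw [hb, real_inner_comm, hsplit, inner_add_right, hinner]
  -- norm bound
  have hda : |a - ‖q - x₀‖| ≤ η := by
    have h1 := abs_norm_sub_norm_le (q - x) (q - x₀)
    have h2 : (q - x) - (q - x₀) = x₀ - x := by abel
    rw [h2, norm_sub_rev x₀ x, ← ha] at h1
    linarith
  have hda1 : ‖q - x₀‖ - η ≤ a := by
    have := abs_le.mp hda; linarith [this.1]
  have hda2 : a ≤ ‖q - x₀‖ + η := by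
    have := abs_le.mp hda; linarith [this.2]
  have halb : 0.8 * r ≤ a := by linarith
  have haub : a ≤ 2.1 * r := by linarith
  have hb_lb : τ * a - 2 * η ≤ b := by
    have := (abs_le.mp hc).1
    rw [hbeq]; nlinarith
  have hb_ub : b ≤ τ * a + 2 * η := by
    have := (abs_le.mp hc).2
    rw [hbeq]; nlinarith
  -- expansion of the norm
  have hrw : q + t • u - x = (q - x) + t • u := by abel
  have key : ‖q + t • u - x‖ ^ 2 = a ^ 2 + 2 * t * b + t ^ 2 := by
    rw [hrw, norm_add_sq_real, real_inner_smul_right, ← hb]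
    have : ‖t • u‖ = t := by
      rw [norm_smul, hu, Real.norm_eq_abs, abs_of_nonneg ht0, mul_one]
    rw [this, ← ha]; ring
  have hnn : (0:ℝ) ≤ ‖q + t • u - x‖ := norm_nonneg _
  have hann : (0:ℝ) ≤ a := ha ▸ norm_nonneg _
  have e1 : t * (τ * a - 2 * η) ≤ t * b := mul_le_mul_of_nonneg_left hb_lb ht0
  have e1' : t * b ≤ t * (τ * a + 2 * η) := mul_le_mul_of_nonneg_left hb_ub ht0
  have e2 : t * η ≤ t * (τ * r / 16) := mul_le_mul_of_nonneg_left hητ ht0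
  have e3 : (t * τ) * (0.8 * r) ≤ (t * τ) * a :=
    mul_le_mul_of_nonneg_left halb (mul_nonneg ht0 hτpos.le)
  have e4 : (τ * τ) * (t * t) ≤ 1 * (t * t) := by
    have : τ * τ ≤ 1 := by nlinarith
    exact mul_le_mul_of_nonneg_right this (mul_nonneg ht0 ht0)
  have e5 : t * t ≤ t * (0.1 * τ * r) := mul_le_mul_of_nonneg_left ht1.le ht0
  have e6 : (0:ℝ) ≤ (τ * t) * (τ * t) := mul_nonneg (mul_nonneg hτpos.le ht0) (mul_nonneg hτpos.le ht0)
  constructor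
  · -- lower bound
    have hsq : (a + 0.5 * τ * t) ^ 2 ≤ ‖q + t • u - x‖ ^ 2 := by
      rw [key]; nlinarith [e1, e2, e3, e4]
    have h1 : 0 ≤ a + 0.5 * τ * t := by positivity
    exact (pow_le_pow_iff_left₀ h1 hnn (by norm_num)).mp hsq
  · -- upper bound
    have hsq : ‖q + t • u - x‖ ^ 2 ≤ (a + 1.7 * τ * t) ^ 2 := by
      rw [key]; nlinarith [e1', e2, e3, e5, e6]
    have h1 : 0 ≤ a + 1.7 * τ * t := by positivity
    exact (pow_le_pow_iff_left₀ hnn h1 (by norm_num)).mp hsq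
end

section
/- Let x₀, q ∈ ℝ^N, let r > 0 and η > 0 with η ≤ 0.1·r and 3·r + η ≤ R, let u ∈ ℝ^N with ‖u‖ = 1, and let τ ∈ ℝ with ⟨u, q − x₀⟩ = τ·‖q − x₀‖ and 16·η/r ≤ τ ≤ 1. Assume 0.9·r ≤ ‖q − x₀‖ ≤ 2·r, and let (x_j)_{j∈V} be a finite nonempty family of points of ℝ^N with ‖x_j − x₀‖ < η for every j ∈ V. Then for every real t with 0 ≤ t < 0.1·τ·r one has p_V(q) − 2·L_p·τ·t ≤ p_V(q + t·u) ≤ p_V(q) − (1/4)·ℓ_p·τ·t. -/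
lemma key_real (r η τ t s e d d' w : ℝ)
    (hr : 0 < r) (hη : 0 < η) (hηr : η ≤ 0.1 * r) (hη16 : 16 * η ≤ τ * r)
    (hτ2 : τ ≤ 1)
    (hs1 : 0.9 * r ≤ s) (hs2 : s ≤ 2 * r) (heη : e ≤ η)
    (hd : |d - s| ≤ e) (hd'0 : 0 ≤ d')
    (hw : |w - τ * s| ≤ e)
    (ht0 : 0 ≤ t) (ht1 : t < 0.1 * τ * r)
    (hd't : d' ≤ d + t)
    (hsq : d' ^ 2 = d ^ 2 + 2 * t * w + t ^ 2) :
    (1 / 4) * τ * t ≤ d' - d ∧ d' - d ≤ 2 * τ * t ∧ d' ≤ 3 * r + η := by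
  have hτ : 0 < τ := by nlinarith
  rw [abs_le] at hd hw
  have hd0 : 0 < d := by nlinarith [hd.1]
  have hsum : 0 < d' + d := by linarith
  have hprod : (d' - d) * (d' + d) = 2 * t * w + t ^ 2 := by linear_combination hsq
  have h1 : (1 / 4) * τ * t ≤ d' - d := by
    rw [← mul_le_mul_iff_of_pos_right hsum, hprod]
    nlinarith [mul_nonneg ht0 (sub_nonneg.2 hw.1), mul_nonneg ht0 ht0,
      mul_nonneg ht0 hτ.le, mul_le_mul_of_nonneg_left hd't (mul_nonneg hτ.le ht0),
      mul_le_mul_of_nonneg_left hd.2 (mul_nonneg hτ.le ht0)]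
  have h2 : d' - d ≤ 2 * τ * t := by
    rw [← mul_le_mul_iff_of_pos_right hsum, hprod]
    have hdd : 0 ≤ d' - d := le_trans (by positivity) h1
    nlinarith [mul_le_mul_of_nonneg_left hw.2 ht0,
      mul_le_mul_of_nonneg_left heη ht0,
      mul_le_mul_of_nonneg_left hd.1 (mul_nonneg hτ.le ht0),
      mul_le_mul_of_nonneg_left heη (mul_nonneg hτ.le ht0),
      mul_le_mul_of_nonneg_left hη16 ht0,
      mul_le_mul_of_nonneg_left ht1.le ht0,
      mul_le_mul_of_nonneg_left hs1 (mul_nonneg hτ.le ht0),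
      mul_nonneg (mul_nonneg hτ.le ht0) hdd,
      mul_nonneg (mul_nonneg (sub_nonneg.2 hτ2) ht0) hη.le]
  refine ⟨h1, h2, ?_⟩
  nlinarith [hd.2]

lemma key_p (p : ℝ → ℝ) (Lp ℓp τ t d d' : ℝ) (hLp0 : 0 ≤ Lp) (hℓp : 0 < ℓp)
    (hLipd : |p d - p d'| ≤ Lp * |d - d'|)
    (hlowd : ℓp * (d' - d) ≤ p d - p d')
    (hτt : 0 ≤ τ * t)
    (k1 : 1 / 4 * τ * t ≤ d' - d) (k2 : d' - d ≤ 2 * τ * t) :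
    p d - 2 * Lp * τ * t ≤ p d' ∧ p d' ≤ p d - 1 / 4 * ℓp * τ * t := by
  have hdd' : d ≤ d' := by linarith
  rw [abs_of_nonpos (by linarith : d - d' ≤ 0)] at hLipd
  constructor
  · have h2' := mul_le_mul_of_nonneg_left k2 hLp0
    have habs := le_abs_self (p d - p d')
    nlinarith
  · have h1' := mul_le_mul_of_nonneg_left k1 hℓp.le
    linarith

/-- The cluster average `p_V(y) = (1/|V|)·Σ_{j∈V} p(‖y − x_j‖)`. -/
noncomputable def clusterAvg {N : ℕ} {ι : Type*} (p : ℝ → ℝ) (V : Finset ι)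
    (x : ι → EuclideanSpace ℝ (Fin N)) (y : EuclideanSpace ℝ (Fin N)) : ℝ :=
  (∑ j ∈ V, p ‖y - x j‖) / V.card

/-- regularity of `p_V` when moving away from the cluster
(`σ = +1` case): for `0 ≤ t < 0.1·τ·r`,
`p_V(q) − 2·L_p·τ·t ≤ p_V(q + t·u) ≤ p_V(q) − (1/4)·ℓ_p·τ·t`. -/
theorem clusterAvg_decrease {N : ℕ} (hN : 0 < N)
    (p : ℝ → ℝ) (Lp ℓp R : ℝ)
    (hp01 : ∀ s : ℝ, 0 ≤ s → p s ∈ Set.Icc (0 : ℝ) 1)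
    (hmono : ∀ a b : ℝ, 0 ≤ a → a ≤ b → p b ≤ p a)
    (hLip : ∀ a b : ℝ, 0 ≤ a → 0 ≤ b → |p a - p b| ≤ Lp * |a - b|)
    (hℓp : 0 < ℓp) (hR : 0 < R)
    (hlow : ∀ a b : ℝ, 0 ≤ a → a ≤ b → b ≤ R → ℓp * (b - a) ≤ p a - p b)
    (x₀ q : EuclideanSpace ℝ (Fin N)) (r η : ℝ)
    (hr : 0 < r) (hη : 0 < η) (hηr : η ≤ 0.1 * r) (hRbig : 3 * r + η ≤ R)
    (u : EuclideanSpace ℝ (Fin N)) (hu : ‖u‖ = 1) (τ : ℝ)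
    (hinner : (inner ℝ u (q - x₀) : ℝ) = τ * ‖q - x₀‖)
    (hτ1 : 16 * η / r ≤ τ) (hτ2 : τ ≤ 1)
    (hq1 : 0.9 * r ≤ ‖q - x₀‖) (hq2 : ‖q - x₀‖ ≤ 2 * r)
    {ι : Type*} (V : Finset ι) (hVne : V.Nonempty)
    (x : ι → EuclideanSpace ℝ (Fin N)) (hx : ∀ j ∈ V, ‖x j - x₀‖ < η) :
    ∀ t : ℝ, 0 ≤ t → t < 0.1 * τ * r →
      clusterAvg p V x q - 2 * Lp * τ * t ≤ clusterAvg p V x (q + t • u) ∧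
        clusterAvg p V x (q + t • u) ≤ clusterAvg p V x q - (1 / 4) * ℓp * τ * t := by
  intro t ht0 ht1
  have hη16 : 16 * η ≤ τ * r := by
    rw [div_le_iff₀ hr] at hτ1; linarith
  have hLp0 : 0 ≤ Lp := by
    have h01 : |p 0 - p 1| ≤ Lp := by simpa using hLip 0 1 le_rfl zero_le_one
    exact le_trans (abs_nonneg _) h01
  have hτ : 0 < τ := by nlinarith
  -- pointwise estimates
  have claim : ∀ j ∈ V,
      p ‖q - x j‖ - 2 * Lp * τ * t ≤ p ‖q + t • u - x j‖ ∧
      p ‖q + t • u - x j‖ ≤ p ‖q - x j‖ - (1 / 4) * ℓp * τ * t := by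
    intro j hj
    have hrw : q + t • u - x j = (q - x j) + t • u := by module
    have hdiffv : (q - x j) - (q - x₀) = x₀ - x j := by module
    have he : ‖x j - x₀‖ ≤ η := (hx j hj).le
    have hd : |‖q - x j‖ - ‖q - x₀‖| ≤ ‖x j - x₀‖ := by
      have h := abs_norm_sub_norm_le (q - x j) (q - x₀)
      rwa [hdiffv, norm_sub_rev x₀] at h
    have h1 : (inner ℝ u (q - x j) : ℝ) - inner ℝ u (q - x₀) = inner ℝ u (x₀ - x j) := by
      rw [← inner_sub_right, hdiffv]
    have hw : |(inner ℝ u (q - x j) : ℝ) - τ * ‖q - x₀‖| ≤ ‖x j - x₀‖ := by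
      have h2 : |(inner ℝ u (x₀ - x j) : ℝ)| ≤ ‖u‖ * ‖x₀ - x j‖ :=
        abs_real_inner_le_norm u (x₀ - x j)
      rw [hu, one_mul, norm_sub_rev x₀] at h2
      rw [← hinner, h1]
      exact h2
    have htn : ‖t • u‖ = t := by
      rw [norm_smul, hu, mul_one, Real.norm_eq_abs, abs_of_nonneg ht0]
    have hsq : ‖q + t • u - x j‖ ^ 2 =
        ‖q - x j‖ ^ 2 + 2 * t * (inner ℝ u (q - x j) : ℝ) + t ^ 2 := by
      rw [hrw, norm_add_sq_real, real_inner_smul_right, real_inner_comm, htn]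
      ring
    have hd't : ‖q + t • u - x j‖ ≤ ‖q - x j‖ + t := by
      rw [hrw]
      calc ‖(q - x j) + t • u‖ ≤ ‖q - x j‖ + ‖t • u‖ := norm_add_le _ _
        _ = ‖q - x j‖ + t := by rw [htn]
    obtain ⟨k1, k2, k3⟩ := key_real r η τ t ‖q - x₀‖ ‖x j - x₀‖ ‖q - x j‖
      ‖q + t • u - x j‖ (inner ℝ u (q - x j)) hr hη hηr hη16 hτ2 hq1 hq2 he hd
      (norm_nonneg _) hw ht0 ht1 hd't hsq
    have hτt : (0:ℝ) ≤ τ * t := mul_nonneg hτ.le ht0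
    have hdd' : ‖q - x j‖ ≤ ‖q + t • u - x j‖ := by linarith
    exact key_p p Lp ℓp τ t ‖q - x j‖ ‖q + t • u - x j‖ hLp0 hℓp
      (hLip _ _ (norm_nonneg _) (norm_nonneg _))
      (hlow _ _ (norm_nonneg _) hdd' (by linarith)) hτt k1 k2
  -- average the pointwise estimates
  have hcard : (0 : ℝ) < V.card := by exact_mod_cast Finset.card_pos.mpr hVne
  have hup : ∑ j ∈ V, p ‖q + t • u - x j‖ ≤
      (∑ j ∈ V, p ‖q - x j‖) - V.card * ((1 / 4) * ℓp * τ * t) := by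
    have h := Finset.sum_le_sum (fun j hj => (claim j hj).2)
    rw [Finset.sum_sub_distrib, Finset.sum_const, nsmul_eq_mul] at h
    linarith
  have hdown : (∑ j ∈ V, p ‖q - x j‖) - V.card * (2 * Lp * τ * t) ≤
      ∑ j ∈ V, p ‖q + t • u - x j‖ := by
    have h := Finset.sum_le_sum (fun j hj => (claim j hj).1)
    rw [Finset.sum_sub_distrib, Finset.sum_const, nsmul_eq_mul] at h
    linarith
  unfold clusterAvg
  have e1 : ∀ B C : ℝ, (B - (V.card : ℝ) * C) / (V.card : ℝ) = B / (V.card : ℝ) - C := by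
    intro B C; field_simp
  constructor
  · have h := (div_le_div_iff_of_pos_right hcard).mpr hdown
    rw [e1] at h
    exact h
  · have h := (div_le_div_iff_of_pos_right hcard).mpr hup
    rw [e1] at h
    exact h
end

section
/- Let x₀, q ∈ ℝ^N, let r > 0 and η > 0 with η ≤ 0.1·r and 3·r + η ≤ R, let u ∈ ℝ^N with ‖u‖ = 1, and let τ ∈ ℝ with ⟨u, x₀ − q⟩ = τ·‖q − x₀‖ and 16·η/r ≤ τ ≤ 1. Assume 0.9·r ≤ ‖q − x₀‖ ≤ 2·r, and let (x_j)_{j∈V} be a finite nonempty family of points of ℝ^N with ‖x_j − x₀‖ < η for every j ∈ V. Then for every real t with 0 ≤ t < 0.1·τ·r one has p_V(q) + (1/4)·ℓ_p·τ·t ≤ p_V(q + t·u) ≤ p_V(q) + 2·L_p·τ·t. -/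
set_option maxHeartbeats 1000000 in
/-- Pure arithmetic core: bounds on the decrease of the distance. -/
theorem cluster_arith (r η R τ t M e d0 dt : ℝ)
    (hr : 0 < r) (hη : 0 < η) (hηr : η ≤ 0.1 * r) (hRbig : 3 * r + η ≤ R)
    (hτpos : 0 < τ) (hη16 : 16 * η ≤ τ * r) (hτ2 : τ ≤ 1)
    (hq1 : 0.9 * r ≤ M) (hq2 : M ≤ 2 * r)
    (ht : 0 ≤ t) (htle : t ≤ 0.1 * τ * r)
    (he1 : -η ≤ e) (he2 : e ≤ η)
    (hd0nn : 0 ≤ d0) (hdtnn : 0 ≤ dt)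
    (hd0M1 : M - η ≤ d0) (hd0M2 : d0 ≤ M + η)
    (hdtge : d0 - t ≤ dt)
    (hD : d0^2 - dt^2 = t * (2 * τ * M - 2 * e - t)) :
    τ * t / 4 ≤ d0 - dt ∧ d0 - dt ≤ 2 * τ * t ∧ dt ≤ d0 ∧ d0 ≤ R := by
  have hτM1 : τ * (0.9 * r) ≤ τ * M := mul_le_mul_of_nonneg_left hq1 hτpos.le
  have hτM2 : τ * M ≤ τ * (2 * r) := mul_le_mul_of_nonneg_left hq2 hτpos.le
  have hτr : (1 - τ) * (τ * r) ≥ 0 := mul_nonneg (by linarith) (by positivity)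
  have hτη : (1 - τ) * η ≥ 0 := mul_nonneg (by linarith) hη.le
  have hfac : 1.575 * (τ * r) ≤ 2 * τ * M - 2 * e - t := by nlinarith
  have hDpos : 0 ≤ d0^2 - dt^2 := by
    rw [hD]; apply mul_nonneg ht; nlinarith
  have hled0 : dt ≤ d0 := by nlinarith [sq_nonneg (d0 - dt), sq_nonneg (d0 + dt)]
  refine ⟨?_, ?_, hled0, by linarith⟩
  · have hnum : t * (1.575 * (τ * r)) ≤ (d0 - dt) * (d0 + dt) := by
      have h := mul_le_mul_of_nonneg_left hfac ht
      nlinarith [h]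
    have hden : d0 + dt ≤ 4.2 * r := by linarith
    have h1 : t * (1.575 * (τ * r)) ≤ (d0 - dt) * (4.2 * r) := by
      nlinarith [mul_nonneg (sub_nonneg.mpr hled0) (sub_nonneg.mpr hden)]
    have h2 : (τ * t / 4) * (4.2 * r) ≤ (d0 - dt) * (4.2 * r) := by
      nlinarith [mul_nonneg (mul_nonneg hτpos.le ht) hr.le]
    exact le_of_mul_le_mul_right h2 (by positivity)
  · have hMd0 : M ≤ d0 + η := by linarith
    have hτM3 : τ * M ≤ τ * (d0 + η) := mul_le_mul_of_nonneg_left hMd0 hτpos.le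
    have hnum : (d0 - dt) * (d0 + dt) ≤ t * (2 * τ * d0 + 2 * τ * η + 2 * η) := by
      have hfac3 : 2 * τ * M - 2 * e - t ≤ 2 * τ * d0 + 2 * τ * η + 2 * η := by nlinarith
      have h := mul_le_mul_of_nonneg_left hfac3 ht
      nlinarith [h]
    have hd08 : 0.8 * r ≤ d0 := by linarith
    have hτd0 : τ * (0.8 * r) ≤ τ * d0 := mul_le_mul_of_nonneg_left hd08 hτpos.le
    have hτt : τ * t ≤ τ * (0.1 * τ * r) := mul_le_mul_of_nonneg_left htle hτpos.le
    have hτt2 : τ * t ≤ 0.1 * (τ * r) := by nlinarith [hτt, hτr]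
    have hτη2 : τ * η ≤ η := by nlinarith [hτη]
    have hbr : 2 * (τ * t) + 2 * (τ * η) + 2 * η ≤ 2 * (τ * d0) := by
      nlinarith [hτd0, hτt2, hτη2, hη16]
    have hdpos : 0 < 2 * d0 - t := by nlinarith [mul_nonneg (sub_nonneg.mpr hτ2) hr.le]
    have hden : 2 * d0 - t ≤ d0 + dt := by linarith
    have h1 : (d0 - dt) * (2 * d0 - t) ≤ t * (2 * τ * d0 + 2 * τ * η + 2 * η) := by
      nlinarith [mul_nonneg (sub_nonneg.mpr hled0) (sub_nonneg.mpr hden)]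
    have h2 : t * (2 * τ * d0 + 2 * τ * η + 2 * η) ≤ (2 * τ * t) * (2 * d0 - t) := by
      have h := mul_nonneg ht (sub_nonneg.mpr hbr)
      nlinarith [h]
    exact le_of_mul_le_mul_right (h1.trans h2) hdpos

set_option maxHeartbeats 1000000 in
/-- Geometric per-point lemma: moving distance `t` in direction `u` shrinks the
distance to `xj` by an amount between `τ·t/4` and `2·τ·t`. -/
theorem cluster_dist_key {N : ℕ}
    (x₀ q : EuclideanSpace ℝ (Fin N)) (r η R : ℝ)
    (hr : 0 < r) (hη : 0 < η) (hηr : η ≤ 0.1 * r) (hRbig : 3 * r + η ≤ R)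
    (u : EuclideanSpace ℝ (Fin N)) (hu : ‖u‖ = 1) (τ : ℝ)
    (hinner : (inner ℝ u (x₀ - q) : ℝ) = τ * ‖q - x₀‖)
    (hτpos : 0 < τ) (hη16 : 16 * η ≤ τ * r) (hτ2 : τ ≤ 1)
    (hq1 : 0.9 * r ≤ ‖q - x₀‖) (hq2 : ‖q - x₀‖ ≤ 2 * r)
    (xj : EuclideanSpace ℝ (Fin N)) (hxj : ‖xj - x₀‖ < η)
    (t : ℝ) (ht : 0 ≤ t) (htlt : t < 0.1 * τ * r) :
    τ * t / 4 ≤ ‖q - xj‖ - ‖q + t • u - xj‖ ∧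
      ‖q - xj‖ - ‖q + t • u - xj‖ ≤ 2 * τ * t ∧
        ‖q + t • u - xj‖ ≤ ‖q - xj‖ ∧ ‖q - xj‖ ≤ R := by
  set M := ‖q - x₀‖ with hM
  set d0 := ‖q - xj‖ with hd0
  set dt := ‖q + t • u - xj‖ with hdt
  set e : ℝ := inner ℝ u (x₀ - xj) with he
  have hd0nn : 0 ≤ d0 := norm_nonneg _
  have hdtnn : 0 ≤ dt := norm_nonneg _
  have hsq : dt^2 = d0^2 + 2 * t * (inner ℝ u (q - xj) : ℝ) + t^2 := by
    have h : q + t • u - xj = (q - xj) + t • u := by abel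
    rw [hdt, h, @norm_add_sq_real, real_inner_smul_right, norm_smul, real_inner_comm]
    simp [hu, abs_of_nonneg ht]
    ring
  have hsplit : (inner ℝ u (q - xj) : ℝ) = -(τ * M) + e := by
    have h : q - xj = -(x₀ - q) + (x₀ - xj) := by abel
    rw [h, inner_add_right, inner_neg_right, hinner, he]
  have heabs : |e| ≤ η := by
    have h1 : |e| ≤ ‖u‖ * ‖x₀ - xj‖ := abs_real_inner_le_norm u _
    have h2 : ‖x₀ - xj‖ = ‖xj - x₀‖ := norm_sub_rev _ _
    rw [hu, one_mul, h2] at h1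
    linarith
  have he1 : -η ≤ e := (abs_le.mp heabs).1
  have he2 : e ≤ η := (abs_le.mp heabs).2
  have hd0M : |d0 - M| ≤ η := by
    have h := abs_norm_sub_norm_le (q - xj) (q - x₀)
    have h2 : (q - xj) - (q - x₀) = x₀ - xj := by abel
    rw [h2] at h
    have h3 : ‖x₀ - xj‖ = ‖xj - x₀‖ := norm_sub_rev _ _
    rw [h3] at h
    exact le_of_lt (lt_of_le_of_lt h hxj)
  have hd0M1 : M - η ≤ d0 := by have := (abs_le.mp hd0M).1; linarith
  have hd0M2 : d0 ≤ M + η := by have := (abs_le.mp hd0M).2; linarith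
  have hdtd0t : |dt - d0| ≤ t := by
    have h := abs_norm_sub_norm_le (q + t • u - xj) (q - xj)
    have h2 : q + t • u - xj - (q - xj) = t • u := by abel
    rw [h2, norm_smul, hu, mul_one, Real.norm_eq_abs, abs_of_nonneg ht] at h
    exact h
  have hdtge : d0 - t ≤ dt := by have := (abs_le.mp hdtd0t).1; linarith
  have hD : d0^2 - dt^2 = t * (2 * τ * M - 2 * e - t) := by
    rw [hsq, hsplit]; ring
  exact cluster_arith r η R τ t M e d0 dt hr hη hηr hRbig hτpos hη16 hτ2 hq1 hq2
    ht htlt.le he1 he2 hd0nn hdtnn hd0M1 hd0M2 hdtge hD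

/-- regularity of `p_V` when moving towards the cluster
(`σ = −1` case): for `0 ≤ t < 0.1·τ·r`,
`p_V(q) + (1/4)·ℓ_p·τ·t ≤ p_V(q + t·u) ≤ p_V(q) + 2·L_p·τ·t`. -/
theorem clusterAvg_increase {N : ℕ} (hN : 0 < N)
    (p : ℝ → ℝ) (Lp ℓp R : ℝ)
    (hp01 : ∀ s : ℝ, 0 ≤ s → p s ∈ Set.Icc (0 : ℝ) 1)
    (hmono : ∀ a b : ℝ, 0 ≤ a → a ≤ b → p b ≤ p a)
    (hLip : ∀ a b : ℝ, 0 ≤ a → 0 ≤ b → |p a - p b| ≤ Lp * |a - b|)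
    (hℓp : 0 < ℓp) (hR : 0 < R)
    (hlow : ∀ a b : ℝ, 0 ≤ a → a ≤ b → b ≤ R → ℓp * (b - a) ≤ p a - p b)
    (x₀ q : EuclideanSpace ℝ (Fin N)) (r η : ℝ)
    (hr : 0 < r) (hη : 0 < η) (hηr : η ≤ 0.1 * r) (hRbig : 3 * r + η ≤ R)
    (u : EuclideanSpace ℝ (Fin N)) (hu : ‖u‖ = 1) (τ : ℝ)
    (hinner : (inner ℝ u (x₀ - q) : ℝ) = τ * ‖q - x₀‖)
    (hτ1 : 16 * η / r ≤ τ) (hτ2 : τ ≤ 1)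
    (hq1 : 0.9 * r ≤ ‖q - x₀‖) (hq2 : ‖q - x₀‖ ≤ 2 * r)
    {ι : Type*} (V : Finset ι) (hVne : V.Nonempty)
    (x : ι → EuclideanSpace ℝ (Fin N)) (hx : ∀ j ∈ V, ‖x j - x₀‖ < η) :
    ∀ t : ℝ, 0 ≤ t → t < 0.1 * τ * r →
      clusterAvg p V x q + (1 / 4) * ℓp * τ * t ≤ clusterAvg p V x (q + t • u) ∧
        clusterAvg p V x (q + t • u) ≤ clusterAvg p V x q + 2 * Lp * τ * t := by
  intro t ht htlt
  have hτpos : 0 < τ := lt_of_lt_of_le (by positivity) hτ1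
  have hη16 : 16 * η ≤ τ * r := by
    rw [div_le_iff₀ hr] at hτ1; linarith
  have hLp0 : 0 ≤ Lp := by
    have h := hLip 0 1 le_rfl zero_le_one
    have h2 : |(0:ℝ) - 1| = 1 := by norm_num
    rw [h2, mul_one] at h
    exact le_trans (abs_nonneg _) h
  -- per-point bounds on p
  have key : ∀ j ∈ V,
      p ‖q - x j‖ + (1 / 4) * ℓp * τ * t ≤ p ‖q + t • u - x j‖ ∧
      p ‖q + t • u - x j‖ ≤ p ‖q - x j‖ + 2 * Lp * τ * t := by
    intro j hj
    obtain ⟨hlo, hhi, hle, hRle⟩ := cluster_dist_key x₀ q r η R hr hη hηr hRbig u hu τ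
      hinner hτpos hη16 hτ2 hq1 hq2 (x j) (hx j hj) t ht htlt
    set d0 := ‖q - x j‖
    set dt := ‖q + t • u - x j‖
    have hd0nn : 0 ≤ d0 := norm_nonneg _
    have hdtnn : 0 ≤ dt := norm_nonneg _
    constructor
    · have h := hlow dt d0 hdtnn hle hRle
      have h2 : ℓp * (τ * t / 4) ≤ ℓp * (d0 - dt) := mul_le_mul_of_nonneg_left hlo hℓp.le
      nlinarith [h, h2]
    · have h := hLip dt d0 hdtnn hd0nn
      have h2 : |dt - d0| = d0 - dt := by
        rw [abs_of_nonpos (by linarith)]; ring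
      rw [h2] at h
      have h3 : p dt - p d0 ≤ |p dt - p d0| := le_abs_self _
      have h4 : Lp * (d0 - dt) ≤ Lp * (2 * τ * t) := mul_le_mul_of_nonneg_left hhi hLp0
      nlinarith [h, h3, h4]
  have hcard : (0:ℝ) < (V.card : ℝ) := by
    exact_mod_cast Finset.card_pos.mpr hVne
  have hsum1 : (∑ j ∈ V, p ‖q - x j‖) + (V.card : ℝ) * ((1 / 4) * ℓp * τ * t)
      ≤ ∑ j ∈ V, p ‖q + t • u - x j‖ := by
    have h := Finset.sum_le_sum (fun j hj => (key j hj).1)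
    rw [Finset.sum_add_distrib, Finset.sum_const, nsmul_eq_mul] at h
    linarith
  have hsum2 : (∑ j ∈ V, p ‖q + t • u - x j‖)
      ≤ (∑ j ∈ V, p ‖q - x j‖) + (V.card : ℝ) * (2 * Lp * τ * t) := by
    have h := Finset.sum_le_sum (fun j hj => (key j hj).2)
    rw [Finset.sum_add_distrib, Finset.sum_const, nsmul_eq_mul] at h
    linarith
  unfold clusterAvg
  constructor
  · rw [div_add' _ _ _ (ne_of_gt hcard)]
    apply div_le_div_of_nonneg_right ?_ hcard.le
    calc (∑ j ∈ V, p ‖q - x j‖) + (1 / 4) * ℓp * τ * t * (V.card : ℝ)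
        = (∑ j ∈ V, p ‖q - x j‖) + (V.card : ℝ) * ((1 / 4) * ℓp * τ * t) := by ring
      _ ≤ _ := hsum1
  · rw [div_add' _ _ _ (ne_of_gt hcard)]
    apply div_le_div_of_nonneg_right ?_ hcard.le
    calc (∑ j ∈ V, p ‖q + t • u - x j‖)
        ≤ (∑ j ∈ V, p ‖q - x j‖) + (V.card : ℝ) * (2 * Lp * τ * t) := hsum2
      _ = (∑ j ∈ V, p ‖q - x j‖) + 2 * Lp * τ * t * (V.card : ℝ) := by ring
end

section
/- Let k ≥ 0 be an integer, let r > 0 and δ > 0 with δ ≤ 0.1·r, and let x₀, x₁, …, x_k, w ∈ ℝ^N satisfy: |‖x_α − x₀‖ − r| ≤ δ for every α ∈ {1,…,k}; |‖x_α − x_β‖ − √2·r| ≤ δ for all distinct α, β ∈ {1,…,k}; |‖w − x₀‖ − r| ≤ δ; and |‖w − x_α‖ − √2·r| ≤ δ for every α ∈ {1,…,k}. Set Y_α := w − x_α for α ∈ {0,1,…,k}. Then for all α, β ∈ {0,1,…,k} one has |⟨Y_α, Y_β⟩ − r² − r²·𝟙(α = β and α ≠ 0)| ≤ 15·r·δ,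 where 𝟙(α = β and α ≠ 0) equals 1 when α = β and α ≠ 0, and 0 otherwise. -/
set_option maxHeartbeats 1000000

private lemma sq_bound_aux (a c δ : ℝ) (hc : 0 ≤ c) (hδ : 0 ≤ δ) (ha : 0 ≤ a)
    (h1 : c - δ ≤ a) (h2 : a ≤ c + δ) :
    c ^ 2 - δ * (2 * c + δ) ≤ a ^ 2 ∧ a ^ 2 ≤ c ^ 2 + δ * (2 * c + δ) := by
  constructor
  · nlinarith [sq_nonneg (a - c), mul_le_mul_of_nonneg_left h1 (by linarith : (0:ℝ) ≤ 2 * c)]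
  · nlinarith [mul_self_le_mul_self ha h2]

/-- near-orthogonality of the vectors `Y_α = w − x_α`: under the stated
approximate-distance hypotheses, `|⟨Y_α, Y_β⟩ − r² − r²·𝟙(α = β ∧ α ≠ 0)| ≤ 15·r·δ`. -/
theorem inner_sub_close_to_orthogonal_frame {N : ℕ} (hN : 0 < N)
    (k : ℕ) (r δ : ℝ) (hr : 0 < r) (hδ : 0 < δ) (hδr : δ ≤ 0.1 * r)
    (x : Fin (k + 1) → EuclideanSpace ℝ (Fin N)) (w : EuclideanSpace ℝ (Fin N))
    (h1 : ∀ α : Fin (k + 1), α ≠ 0 → |‖x α - x 0‖ - r| ≤ δ)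
    (h2 : ∀ α β : Fin (k + 1), α ≠ 0 → β ≠ 0 → α ≠ β →
      |‖x α - x β‖ - Real.sqrt 2 * r| ≤ δ)
    (h3 : |‖w - x 0‖ - r| ≤ δ)
    (h4 : ∀ α : Fin (k + 1), α ≠ 0 → |‖w - x α‖ - Real.sqrt 2 * r| ≤ δ) :
    ∀ α β : Fin (k + 1),
      |(inner ℝ (w - x α) (w - x β) : ℝ) - r ^ 2
          - r ^ 2 * (if α = β ∧ α ≠ 0 then 1 else 0)| ≤ 15 * r * δ := by
  have hs2 : Real.sqrt 2 ^ 2 = 2 := Real.sq_sqrt (by norm_num)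
  have hs1 : 1 ≤ Real.sqrt 2 := by nlinarith [Real.sqrt_nonneg 2]
  have hs15 : Real.sqrt 2 ≤ 1.5 := by nlinarith [Real.sqrt_nonneg 2]
  set s := Real.sqrt 2 with hs
  have hrδ : 0 < r * δ := mul_pos hr hδ
  -- squared-norm bounds for the two kinds of approximate distances
  have keyR : ∀ a : ℝ, 0 ≤ a → |a - r| ≤ δ →
      r ^ 2 - 2.1 * (r * δ) ≤ a ^ 2 ∧ a ^ 2 ≤ r ^ 2 + 2.1 * (r * δ) := by
    intro a ha h
    rw [abs_le] at h
    obtain ⟨l, u⟩ := sq_bound_aux a r δ hr.le hδ.le ha (by linarith) (by linarith)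
    have hb : δ * (2 * r + δ) ≤ 2.1 * (r * δ) := by nlinarith
    exact ⟨by linarith, by linarith⟩
  have keyS : ∀ a : ℝ, 0 ≤ a → |a - s * r| ≤ δ →
      2 * r ^ 2 - 3.1 * (r * δ) ≤ a ^ 2 ∧ a ^ 2 ≤ 2 * r ^ 2 + 3.1 * (r * δ) := by
    intro a ha h
    rw [abs_le] at h
    have hsr : 0 ≤ s * r := by positivity
    obtain ⟨l, u⟩ := sq_bound_aux a (s * r) δ hsr hδ.le ha (by linarith) (by linarith)
    have hsq : (s * r) ^ 2 = 2 * r ^ 2 := by rw [mul_pow, hs2]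
    have hb : δ * (2 * (s * r) + δ) ≤ 3.1 * (r * δ) := by
      nlinarith [mul_le_mul_of_nonneg_left hs15 (by positivity : (0:ℝ) ≤ 2 * r * δ)]
    constructor <;> nlinarith
  intro α β
  rcases eq_or_ne α β with rfl | hab
  · rcases eq_or_ne α 0 with rfl | ha
    · rw [if_neg (by simp), real_inner_self_eq_norm_sq]
      obtain ⟨l, u⟩ := keyR _ (norm_nonneg (w - x 0)) h3
      rw [abs_le]
      constructor <;> nlinarith
    · rw [if_pos ⟨rfl, ha⟩, real_inner_self_eq_norm_sq]
      obtain ⟨l, u⟩ := keyS _ (norm_nonneg (w - x α)) (h4 α ha)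
      rw [abs_le]
      constructor <;> nlinarith
  · rw [if_neg (by simp [hab])]
    rw [real_inner_eq_norm_mul_self_add_norm_mul_self_sub_norm_sub_mul_self_div_two]
    have hsub : (w - x α) - (w - x β) = x β - x α := by abel
    rw [hsub]
    have hAB : ∀ u : EuclideanSpace ℝ (Fin N), ‖u‖ * ‖u‖ = ‖u‖ ^ 2 := fun u => (sq ‖u‖).symm
    rw [hAB, hAB, hAB]
    rcases eq_or_ne α 0 with rfl | ha
    · have hb : β ≠ 0 := fun h => hab (h ▸ rfl)
      obtain ⟨lA, uA⟩ := keyR _ (norm_nonneg (w - x 0)) h3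
      obtain ⟨lB, uB⟩ := keyS _ (norm_nonneg (w - x β)) (h4 β hb)
      obtain ⟨lC, uC⟩ := keyR _ (norm_nonneg (x β - x 0)) (h1 β hb)
      rw [abs_le]
      constructor <;> nlinarith
    · rcases eq_or_ne β 0 with rfl | hb
      · have hCr : |‖x 0 - x α‖ - r| ≤ δ := by rw [norm_sub_rev]; exact h1 α ha
        obtain ⟨lA, uA⟩ := keyS _ (norm_nonneg (w - x α)) (h4 α ha)
        obtain ⟨lB, uB⟩ := keyR _ (norm_nonneg (w - x 0)) h3
        obtain ⟨lC, uC⟩ := keyR _ (norm_nonneg (x 0 - x α)) hCr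
        rw [abs_le]
        constructor <;> nlinarith
      · obtain ⟨lA, uA⟩ := keyS _ (norm_nonneg (w - x α)) (h4 α ha)
        obtain ⟨lB, uB⟩ := keyS _ (norm_nonneg (w - x β)) (h4 β hb)
        obtain ⟨lC, uC⟩ := keyS _ (norm_nonneg (x β - x α)) (h2 β α hb ha (Ne.symm hab))
        rw [abs_le]
        constructor <;> nlinarith
end

section
/- Let k ≥ 0 be an integer, let r > 0 and δ > 0 with 60·(k+1)²·δ ≤ r, and let B be a real (k+1)×(k+1) matrix indexed by {0,1,…,k} whose entries satisfy |B_{αβ} − r² − r²·𝟙(α = β and α ≠ 0)| ≤ 15·r·δ for all α, β ∈ {0,1,…,k}, where 𝟙(α = β and α ≠ 0) equals 1 when α = β and α ≠ 0, and 0 otherwise. Then ‖B·v‖ ≥ (r²/(4·(k+1)))·‖v‖ for every v ∈ ℝ^{k+1}; in particular the least singular value of B is at least r²/(4·(k+1)). -/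
/-!
Write `B = r² A + E`, where `A` is the all-ones matrix plus `diag(0, 1, …, 1)` and every entry
of `E` is at most `15 r δ`. The matrix `A` has an explicit left inverse whose Frobenius norm is
at most `2 (k + 1)`, so `‖A v‖ ≥ ‖v‖ / (2 (k + 1))`, while `‖E v‖ ≤ 15 (k + 1) r δ ‖v‖`, which is
at most `r² ‖v‖ / (4 (k + 1))` because `60 (k + 1)² δ ≤ r`.
-/

open scoped Matrix.Norms.Frobenius
open WithLp

theorem sqrt_sum_sq_eq_norm_toLp {ι : Type*} [Fintype ι] (v : ι → ℝ) :
    √(∑ i, v i ^ 2) = ‖toLp 2 v‖ := by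
  simp [EuclideanSpace.norm_eq]

namespace Matrix

variable {m n : Type*} [Fintype m] [Fintype n]

theorem frobenius_norm_eq_sqrt {α : Type*} [SeminormedAddCommGroup α] (A : Matrix m n α) :
    ‖A‖ = √(∑ i, ∑ j, ‖A i j‖ ^ 2) := by
  simp only [frobenius_norm_def, Real.rpow_two, Real.sqrt_eq_rpow]

theorem frobenius_norm_le_of_forall_norm_le {α : Type*} [SeminormedAddCommGroup α]
    (A : Matrix m n α) {ε : ℝ} (hε : 0 ≤ ε) (h : ∀ i j, ‖A i j‖ ≤ ε) :
    ‖A‖ ≤ √(Fintype.card m * Fintype.card n) * ε := by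
  have hsum : ∑ i, ∑ j, ‖A i j‖ ^ 2 ≤ Fintype.card m * Fintype.card n * ε ^ 2 :=
    calc ∑ i, ∑ j, ‖A i j‖ ^ 2 ≤ ∑ _i : m, ∑ _j : n, ε ^ 2 := by
          gcongr with i _ j; exact h i j
      _ = Fintype.card m * Fintype.card n * ε ^ 2 := by simp [mul_assoc]
  rw [frobenius_norm_eq_sqrt, ← Real.sqrt_sq hε, ← Real.sqrt_mul (by positivity)]
  exact Real.sqrt_le_sqrt hsum

variable {𝕜 : Type*} [RCLike 𝕜]

theorem norm_toLp_mulVec_le (A : Matrix m n 𝕜) (v : n → 𝕜) :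
    ‖toLp 2 (A *ᵥ v)‖ ≤ ‖A‖ * ‖toLp 2 v‖ := by
  have h := frobenius_norm_mul A (replicateCol (Fin 1) v)
  rw [← replicateCol_mulVec] at h
  exact (frobenius_norm_replicateCol _).symm.trans_le
    (h.trans_eq (congrArg (‖A‖ * ·) (frobenius_norm_replicateCol v)))

theorem norm_toLp_le_of_mul_eq_one [DecidableEq n] {C : Matrix n m 𝕜} {A : Matrix m n 𝕜}
    (hCA : C * A = 1) (v : n → 𝕜) : ‖toLp 2 v‖ ≤ ‖C‖ * ‖toLp 2 (A *ᵥ v)‖ := by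
  simpa only [mulVec_mulVec, hCA, one_mulVec] using norm_toLp_mulVec_le C (A *ᵥ v)

end Matrix

open Matrix

def onesAddTailDiag (n : ℕ) : Matrix (Fin (n + 1)) (Fin (n + 1)) ℝ :=
  of fun i j => 1 + if i = j ∧ i ≠ 0 then 1 else 0

def onesAddTailDiagInv (n : ℕ) : Matrix (Fin (n + 1)) (Fin (n + 1)) ℝ :=
  of fun i j => if i = 0 then (if j = 0 then (n + 1 : ℝ) else -1) else
    (if j = 0 then -1 else if i = j then 1 else 0)

theorem onesAddTailDiagInv_mul (n : ℕ) : onesAddTailDiagInv n * onesAddTailDiag n = 1 := by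
  ext i j
  cases i using Fin.cases <;> cases j using Fin.cases <;>
    simp [mul_apply, Fin.sum_univ_succ, onesAddTailDiag, onesAddTailDiagInv, one_apply,
      Fin.succ_ne_zero, ite_and, Finset.sum_add_distrib, eq_comm (a := (0 : Fin _))]

theorem frobenius_norm_onesAddTailDiagInv_le (n : ℕ) :
    ‖onesAddTailDiagInv n‖ ≤ 2 * (n + 1) := by
  have hsq : ∑ i, ∑ j, ‖onesAddTailDiagInv n i j‖ ^ 2 = (n + 1) ^ 2 + 3 * n := by
    simp only [onesAddTailDiagInv, of_apply, Real.norm_eq_abs, sq_abs, ite_pow, even_two,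
      Even.neg_pow, one_pow, ne_eq, OfNat.ofNat_ne_zero, not_false_eq_true, zero_pow,
      Finset.sum_ite_irrel, Fin.sum_univ_succ, ↓reduceIte, Fin.succ_ne_zero, Finset.sum_const,
      Finset.card_univ, Fintype.card_fin, nsmul_eq_mul, mul_one, Finset.sum_boole, Fin.succ_inj,
      Finset.filter_eq, Finset.mem_univ, Finset.card_singleton, Nat.cast_one, smul_add]
    ring
  rw [frobenius_norm_eq_sqrt, hsq, Real.sqrt_le_left (by positivity)]
  nlinarith

theorem norm_toLp_le_mul_norm_onesAddTailDiag_mulVec (n : ℕ) (v : Fin (n + 1) → ℝ) :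
    ‖toLp 2 v‖ ≤ 2 * (n + 1) * ‖toLp 2 (onesAddTailDiag n *ᵥ v)‖ :=
  (norm_toLp_le_of_mul_eq_one (onesAddTailDiagInv_mul n) v).trans
    (by gcongr; exact frobenius_norm_onesAddTailDiagInv_le n)

/-- a `(k+1)×(k+1)` matrix whose entries are within `15·r·δ` of
`r²·(1 + 𝟙(α = β ∧ α ≠ 0))` satisfies `‖B·v‖ ≥ (r²/(4(k+1)))·‖v‖` for every `v`
(Euclidean norms); in particular its least singular value is at least `r²/(4(k+1))`. -/
theorem matrix_least_singular_value_lower_bound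
    (k : ℕ) (r δ : ℝ) (hr : 0 < r) (hδ : 0 < δ)
    (hkδ : 60 * ((k : ℝ) + 1) ^ 2 * δ ≤ r)
    (B : Matrix (Fin (k + 1)) (Fin (k + 1)) ℝ)
    (hB : ∀ α β : Fin (k + 1),
      |B α β - r ^ 2 - r ^ 2 * (if α = β ∧ α ≠ 0 then 1 else 0)| ≤ 15 * r * δ) :
    ∀ v : Fin (k + 1) → ℝ,
      r ^ 2 / (4 * ((k : ℝ) + 1)) * Real.sqrt (∑ i, v i ^ 2) ≤
        Real.sqrt (∑ i, (B.mulVec v i) ^ 2) := by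
  intro v
  set K : ℝ := (k : ℝ) + 1
  set A := onesAddTailDiag k
  set E := B - r ^ 2 • A
  have hE : ∀ i j, ‖E i j‖ ≤ 15 * r * δ := fun i j => by
    simpa [E, A, onesAddTailDiag, mul_add, sub_sub] using hB i j
  have hBv : toLp 2 (B *ᵥ v) = r ^ 2 • toLp 2 (A *ᵥ v) + toLp 2 (E *ᵥ v) := by
    rw [← toLp_smul, ← toLp_add, ← smul_mulVec, ← add_mulVec, add_sub_cancel]
  have hAv : ‖toLp 2 v‖ ≤ 2 * K * ‖toLp 2 (A *ᵥ v)‖ :=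
    norm_toLp_le_mul_norm_onesAddTailDiag_mulVec k v
  have hEv : ‖toLp 2 (E *ᵥ v)‖ ≤ K * (15 * r * δ) * ‖toLp 2 v‖ := by
    refine (norm_toLp_mulVec_le E v).trans (mul_le_mul_of_nonneg_right ?_ (norm_nonneg _))
    simpa [K, Real.sqrt_mul_self (by positivity : (0 : ℝ) ≤ k + 1)] using
      frobenius_norm_le_of_forall_norm_le E (by positivity) hE
  have hsmall : K * (15 * r * δ) ≤ r ^ 2 / (4 * K) := by
    rw [le_div_iff₀ (by positivity)]
    nlinarith
  rw [sqrt_sum_sq_eq_norm_toLp, sqrt_sum_sq_eq_norm_toLp, hBv]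
  calc r ^ 2 / (4 * K) * ‖toLp 2 v‖
      = r ^ 2 / (2 * K) * ‖toLp 2 v‖ - r ^ 2 / (4 * K) * ‖toLp 2 v‖ := by field_simp; ring
    _ ≤ r ^ 2 * ‖toLp 2 (A *ᵥ v)‖ - ‖toLp 2 (E *ᵥ v)‖ := by
        gcongr ?_ - ?_
        · rw [div_mul_eq_mul_div, div_le_iff₀ (by positivity)]
          nlinarith
        · exact hEv.trans (by gcongr)
    _ ≤ ‖r ^ 2 • toLp 2 (A *ᵥ v) + toLp 2 (E *ᵥ v)‖ := by
        rw [← norm_smul_of_nonneg (by positivity)]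
        simpa using norm_sub_norm_le (r ^ 2 • toLp 2 (A *ᵥ v)) (-toLp 2 (E *ᵥ v))
end

section
/- Let k ≥ 0 be an integer, let r > 0 and δ > 0 with δ ≤ 0.1·r and 60·(k+1)²·δ ≤ r, and let x₀, x₁, …, x_k, w ∈ ℝ^N satisfy: |‖x_α − x₀‖ − r| ≤ δ for every α ∈ {1,…,k}; |‖x_α − x_β‖ − √2·r| ≤ δ for all distinct α, β ∈ {1,…,k}; |‖w − x₀‖ − r| ≤ δ; and |‖w − x_α‖ − √2·r| ≤ δ for every α ∈ {1,…,k}. Then for every v = (v₀, v₁, …, v_k) ∈ ℝ^{k+1} one has ‖Σ_{α=0}^{k} v_α·(w − x_α)‖ ≥ (r/(2·√(k+1)))·‖v‖. -/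
/-!
Put `y α = w - x α`. The hypotheses fix every `‖y α‖` and every `‖y α - y β‖ = ‖x β - x α‖` up to
`δ`, so by polarization the Gram matrix `⟪y α, y β⟫` is within `9 r δ / 2` of `r ^ 2 • G`, where
`G = modelGram k`. Hence `‖∑ α, v α • y α‖ ^ 2 ≥ r ^ 2 vᵀ G v - (9 r δ / 2) (∑ α, |v α|) ^ 2`.
The exact form `vᵀ G v = (∑ α, v α) ^ 2 + ∑ α ≠ 0, v α ^ 2` is at least `‖v‖ ^ 2 / (2 (k + 1))` by
Cauchy–Schwarz, while the error is at most `(9 r δ / 2) (k + 1) ‖v‖ ^ 2 ≤ r ^ 2 ‖v‖ ^ 2 / (4 (k + 1))`.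
-/

open Finset RealInnerProductSpace

lemma abs_sq_sub_sq_le_of_abs_sub_le {t s d : ℝ} (hs : 0 ≤ s) (h : |t - s| ≤ d) :
    |t ^ 2 - s ^ 2| ≤ d * (2 * s + d) := by
  have hts : |t + s| ≤ 2 * s + d :=
    calc |t + s| = |(t - s) + 2 * s| := by ring_nf
      _ ≤ |t - s| + |2 * s| := abs_add_le _ _
      _ ≤ 2 * s + d := by rw [abs_of_nonneg (by positivity : 0 ≤ 2 * s)]; linarith
  rw [sq_sub_sq, abs_mul, mul_comm]
  exact mul_le_mul h hts (abs_nonneg _) ((abs_nonneg _).trans h)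

lemma abs_sq_sub_sq_le_three_mul {t s r δ : ℝ} (hs : 0 ≤ s) (hsr : s ≤ √2 * r)
    (hδr : δ ≤ 0.1 * r) (h : |t - s| ≤ δ) : |t ^ 2 - s ^ 2| ≤ 3 * r * δ := by
  have hδ : 0 ≤ δ := (abs_nonneg _).trans h
  have hsqrt2 : √2 < 1.45 := by
    rw [Real.sqrt_lt' (by norm_num)]
    norm_num
  calc |t ^ 2 - s ^ 2| ≤ δ * (2 * s + δ) := abs_sq_sub_sq_le_of_abs_sub_le hs h
    _ ≤ δ * (3 * r) := by gcongr; nlinarith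
    _ = 3 * r * δ := by ring

lemma abs_inner_sub_le_of_abs_norm_sq_sub_le {E : Type*} [NormedAddCommGroup E]
    [InnerProductSpace ℝ E] {a b : E} {p q s m ε : ℝ} (hm : p + q - s = 2 * m)
    (ha : |‖a‖ ^ 2 - p| ≤ ε) (hb : |‖b‖ ^ 2 - q| ≤ ε) (hab : |‖a - b‖ ^ 2 - s| ≤ ε) :
    |⟪a, b⟫ - m| ≤ 3 / 2 * ε := by
  have := norm_sub_sq_real a b
  rw [abs_le] at ha hb hab ⊢
  constructor <;> linarith [ha.1, ha.2, hb.1, hb.2, hab.1, hab.2]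

lemma norm_sum_smul_sq {ι E : Type*} [Fintype ι] [NormedAddCommGroup E]
    [InnerProductSpace ℝ E] (v : ι → ℝ) (y : ι → E) :
    ‖∑ i, v i • y i‖ ^ 2 = ∑ i, ∑ j, v i * v j * ⟪y i, y j⟫ := by
  simp only [← real_inner_self_eq_norm_sq, sum_inner, inner_sum, real_inner_smul_left,
    real_inner_smul_right]
  exact sum_congr rfl fun i _ => sum_congr rfl fun j _ => by rw [real_inner_comm]; ring

lemma sum_sum_mul_sub_le_norm_sum_smul_sq {ι E : Type*} [Fintype ι] [NormedAddCommGroup E]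
    [InnerProductSpace ℝ E] (y : ι → E) (m : ι → ι → ℝ) {ε : ℝ}
    (hm : ∀ i j, |⟪y i, y j⟫ - m i j| ≤ ε) (v : ι → ℝ) :
    ∑ i, ∑ j, v i * v j * m i j - ε * (∑ i, |v i|) ^ 2 ≤ ‖∑ i, v i • y i‖ ^ 2 := by
  rw [norm_sum_smul_sq, sq, sum_mul_sum, mul_sum, ← sum_sub_distrib]
  refine sum_le_sum fun i _ => ?_
  rw [mul_sum, ← sum_sub_distrib]
  refine sum_le_sum fun j _ => ?_
  have := neg_abs_le (v i * v j * (⟪y i, y j⟫ - m i j))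
  rw [abs_mul, abs_mul] at this
  nlinarith [mul_le_mul_of_nonneg_left (hm i j) (mul_nonneg (abs_nonneg (v i)) (abs_nonneg (v j)))]

/-- The Gram matrix of the vectors `w - x α` for the exact configuration `x 0 = 0`,
`x α = e α` (`α ≠ 0`), `w = e (k + 1)`, with `e` an orthonormal family. -/
def modelGram (k : ℕ) (α β : Fin (k + 1)) : ℝ := if α = β ∧ α ≠ 0 then 2 else 1

lemma sum_sum_mul_modelGram (k : ℕ) (v : Fin (k + 1) → ℝ) :
    ∑ α, ∑ β, v α * v β * modelGram k α β = (∑ α, v α) ^ 2 + ∑ α : Fin k, v α.succ ^ 2 := by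
  have hterm : ∀ α β, v α * v β * modelGram k α β
      = v α * v β + if α = β then (if α ≠ 0 then v α * v β else 0) else 0 := by
    intro α β
    unfold modelGram
    split_ifs <;> simp_all
    ring
  simp only [hterm, sum_add_distrib, sum_ite_eq, mem_univ, if_true, ← sum_mul_sum, ← sq]
  simp [Fin.sum_univ_succ, Fin.succ_ne_zero, sq]

lemma sum_sq_div_le_sq_sum_add_sum_succ_sq (k : ℕ) (v : Fin (k + 1) → ℝ) :
    (∑ α, v α ^ 2) / (2 * (k + 1)) ≤ (∑ α, v α) ^ 2 + ∑ α : Fin k, v α.succ ^ 2 := by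
  rw [Fin.sum_univ_succ, Fin.sum_univ_succ, div_le_iff₀ (by positivity)]
  set T := ∑ α : Fin k, v α.succ
  set A := ∑ α : Fin k, v α.succ ^ 2
  have hA : 0 ≤ A := sum_nonneg fun _ _ => sq_nonneg _
  have hCS : T ^ 2 ≤ k * A := by
    simpa using sq_sum_le_card_mul_sum_sq (s := univ) (f := fun α : Fin k => v α.succ)
  nlinarith [sq_nonneg (v 0 + 2 * T), mul_nonneg (Nat.cast_nonneg k : (0 : ℝ) ≤ k) (sq_nonneg (v 0 + T))]

lemma abs_inner_sub_sub_sub_modelGram_le {E : Type*} [NormedAddCommGroup E]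
    [InnerProductSpace ℝ E] {k : ℕ} {r δ : ℝ} (hδr : δ ≤ 0.1 * r) (x : Fin (k + 1) → E) (w : E)
    (h1 : ∀ α : Fin (k + 1), α ≠ 0 → |‖x α - x 0‖ - r| ≤ δ)
    (h2 : ∀ α β : Fin (k + 1), α ≠ 0 → β ≠ 0 → α ≠ β → |‖x α - x β‖ - √2 * r| ≤ δ)
    (h3 : |‖w - x 0‖ - r| ≤ δ)
    (h4 : ∀ α : Fin (k + 1), α ≠ 0 → |‖w - x α‖ - √2 * r| ≤ δ) (α β : Fin (k + 1)) :
    |⟪w - x α, w - x β⟫ - r ^ 2 * modelGram k α β| ≤ 3 / 2 * (3 * r * δ) := by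
  have hδ : 0 ≤ δ := (abs_nonneg _).trans h3
  have hr : 0 ≤ r := by linarith
  have hr2 : r ≤ √2 * r := le_mul_of_one_le_left hr (Real.one_le_sqrt.mpr one_le_two)
  have hsq2 : (√2 * r) ^ 2 = 2 * r ^ 2 := by rw [mul_pow, Real.sq_sqrt zero_le_two]
  have hnorm : ∀ γ, |‖w - x γ‖ ^ 2 - r ^ 2 * (if γ = 0 then 1 else 2)| ≤ 3 * r * δ := by
    intro γ
    split_ifs with hγ
    · subst hγ
      simpa using abs_sq_sub_sq_le_three_mul hr hr2 hδr h3
    · rw [mul_comm, ← hsq2]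
      exact abs_sq_sub_sq_le_three_mul (by positivity) le_rfl hδr (h4 γ hγ)
  have hdist : |‖(w - x α) - (w - x β)‖ ^ 2 -
      r ^ 2 * (if α = β then 0 else if α = 0 ∨ β = 0 then 1 else 2)| ≤ 3 * r * δ := by
    rw [sub_sub_sub_cancel_left]
    split_ifs with hαβ hzero
    · subst hαβ
      simp only [sub_self, norm_zero, mul_zero]
      norm_num
      positivity
    · rcases hzero with rfl | rfl
      · simpa using abs_sq_sub_sq_le_three_mul hr hr2 hδr (h1 β (Ne.symm hαβ))
      · simpa [norm_sub_rev] using abs_sq_sub_sq_le_three_mul hr hr2 hδr (h1 α hαβ)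
    · rw [not_or] at hzero
      rw [mul_comm, ← hsq2]
      exact abs_sq_sub_sq_le_three_mul (by positivity) le_rfl hδr
        (h2 β α hzero.2 hzero.1 (Ne.symm hαβ))
  refine abs_inner_sub_le_of_abs_norm_sq_sub_le ?_ (hnorm α) (hnorm β) hdist
  unfold modelGram
  split_ifs <;> simp_all <;> ring

theorem smul_sub_combination_lower_bound_general {N : ℕ}
    (k : ℕ) (r δ : ℝ) (hr : 0 < r) (hδ : 0 < δ) (hδr : δ ≤ 0.1 * r)
    (hkδ : 60 * ((k : ℝ) + 1) ^ 2 * δ ≤ r)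
    (x : Fin (k + 1) → EuclideanSpace ℝ (Fin N)) (w : EuclideanSpace ℝ (Fin N))
    (h1 : ∀ α : Fin (k + 1), α ≠ 0 → |‖x α - x 0‖ - r| ≤ δ)
    (h2 : ∀ α β : Fin (k + 1), α ≠ 0 → β ≠ 0 → α ≠ β →
      |‖x α - x β‖ - Real.sqrt 2 * r| ≤ δ)
    (h3 : |‖w - x 0‖ - r| ≤ δ)
    (h4 : ∀ α : Fin (k + 1), α ≠ 0 → |‖w - x α‖ - Real.sqrt 2 * r| ≤ δ) :
    ∀ v : Fin (k + 1) → ℝ,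
      r / (2 * Real.sqrt ((k : ℝ) + 1)) * Real.sqrt (∑ α, v α ^ 2) ≤
        ‖∑ α, v α • (w - x α)‖ := by
  intro v
  set K : ℝ := k + 1
  set P := ∑ α, v α ^ 2
  have hK : 0 < K := by positivity
  have hP : 0 ≤ P := by positivity
  have hgram := sum_sum_mul_sub_le_norm_sum_smul_sq (fun α => w - x α) _
    (abs_inner_sub_sub_sub_modelGram_le hδr x w h1 h2 h3 h4) v
  have hmodel : r ^ 2 * (P / (2 * K)) ≤ ∑ α, ∑ β, v α * v β * (r ^ 2 * modelGram k α β) := by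
    simp only [mul_left_comm _ (r ^ 2), ← mul_sum, sum_sum_mul_modelGram]
    exact mul_le_mul_of_nonneg_left (sum_sq_div_le_sq_sum_add_sum_succ_sq k v) (sq_nonneg r)
  have hcs : (∑ α, |v α|) ^ 2 ≤ K * P := by
    simpa [K, P] using sq_sum_le_card_mul_sum_sq (s := univ) (f := fun α => |v α|)
  have herr : 3 / 2 * (3 * r * δ) * K ≤ r ^ 2 / (4 * K) := by
    rw [le_div_iff₀ (by positivity)]
    nlinarith
  have hsq : (r / (2 * √K) * √P) ^ 2 = r ^ 2 / (4 * K) * P := by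
    rw [mul_pow, div_pow, mul_pow, Real.sq_sqrt hK.le, Real.sq_sqrt hP]
    ring
  rw [← pow_le_pow_iff_left₀ (by positivity) (norm_nonneg _) two_ne_zero, hsq]
  calc r ^ 2 / (4 * K) * P = r ^ 2 * (P / (2 * K)) - r ^ 2 / (4 * K) * P := by field_simp; ring
    _ ≤ _ - 3 / 2 * (3 * r * δ) * (K * P) := by
      rw [← mul_assoc]
      exact sub_le_sub hmodel (mul_le_mul_of_nonneg_right herr hP)
    _ ≤ _ - 3 / 2 * (3 * r * δ) * (∑ α, |v α|) ^ 2 := by gcongr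
    _ ≤ _ := hgram

/-- under the approximate-distance hypotheses of the almost-orthogonal
configuration, for every `v ∈ ℝ^{k+1}` one has
`‖Σ_α v_α·(w − x_α)‖ ≥ (r/(2·√(k+1)))·‖v‖`. -/
theorem smul_sub_combination_lower_bound {N : ℕ} (hN : 0 < N)
    (k : ℕ) (r δ : ℝ) (hr : 0 < r) (hδ : 0 < δ) (hδr : δ ≤ 0.1 * r)
    (hkδ : 60 * ((k : ℝ) + 1) ^ 2 * δ ≤ r)
    (x : Fin (k + 1) → EuclideanSpace ℝ (Fin N)) (w : EuclideanSpace ℝ (Fin N))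
    (h1 : ∀ α : Fin (k + 1), α ≠ 0 → |‖x α - x 0‖ - r| ≤ δ)
    (h2 : ∀ α β : Fin (k + 1), α ≠ 0 → β ≠ 0 → α ≠ β →
      |‖x α - x β‖ - Real.sqrt 2 * r| ≤ δ)
    (h3 : |‖w - x 0‖ - r| ≤ δ)
    (h4 : ∀ α : Fin (k + 1), α ≠ 0 → |‖w - x α‖ - Real.sqrt 2 * r| ≤ δ) :
    ∀ v : Fin (k + 1) → ℝ,
      r / (2 * Real.sqrt ((k : ℝ) + 1)) * Real.sqrt (∑ α, v α ^ 2) ≤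
        ‖∑ α, v α • (w - x α)‖ :=
  smul_sub_combination_lower_bound_general k r δ hr hδ hδr hkδ x w h1 h2 h3 h4
end

section
/- Let d ≥ 1 be an integer, let r > 0 and δ > 0 with 12·d·δ ≤ r, and let w, x₁, …, x_d ∈ ℝ^N satisfy |‖w − x_α‖ − r| ≤ 3·δ for every α ∈ {1,…,d} and |‖x_α − x_β‖ − √2·r| ≤ δ for all distinct α, β ∈ {1,…,d}. Then for every v = (v₁, …, v_d) ∈ ℝ^d one has ‖Σ_{α=1}^{d} v_α·(w − x_α)‖ ≥ (r/2)·‖v‖. -/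
set_option maxHeartbeats 4000000


open scoped BigOperators
open scoped RealInnerProductSpace
open Finset

/-- if `|‖w − x_α‖ − r| ≤ 3δ` for all `α`, `|‖x_α − x_β‖ − √2·r| ≤ δ` for
all `α ≠ β`, and `12·d·δ ≤ r`, then `‖Σ_α v_α·(w − x_α)‖ ≥ (r/2)·‖v‖` for all `v ∈ ℝ^d`. -/
theorem smul_sub_combination_lower_bound' {N : ℕ} (hN : 0 < N)
    (d : ℕ) (hd : 1 ≤ d) (r δ : ℝ) (hr : 0 < r) (hδ : 0 < δ)
    (hdδ : 12 * (d : ℝ) * δ ≤ r)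
    (w : EuclideanSpace ℝ (Fin N)) (x : Fin d → EuclideanSpace ℝ (Fin N))
    (h1 : ∀ α : Fin d, |‖w - x α‖ - r| ≤ 3 * δ)
    (h2 : ∀ α β : Fin d, α ≠ β → |‖x α - x β‖ - Real.sqrt 2 * r| ≤ δ) :
    ∀ v : Fin d → ℝ,
      r / 2 * Real.sqrt (∑ α, v α ^ 2) ≤ ‖∑ α, v α • (w - x α)‖ := by
  intro v
  set y : Fin d → EuclideanSpace ℝ (Fin N) := fun α => w - x α with hy
  have hd1 : (1:ℝ) ≤ d := by exact_mod_cast hd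
  have hδr : 12 * δ ≤ r := by nlinarith
  have hr3 : 0 ≤ r - 3*δ := by nlinarith
  have hnorm : ∀ α, r - 3*δ ≤ ‖y α‖ ∧ ‖y α‖ ≤ r + 3*δ := by
    intro α
    have h := abs_le.mp (h1 α)
    exact ⟨by linarith [h.1], by linarith [h.2]⟩
  have hsqrt2 : Real.sqrt 2 ^ 2 = 2 := Real.sq_sqrt (by norm_num)
  have hsqrt2le : Real.sqrt 2 ≤ 1.5 := by
    rw [show (1.5:ℝ) = Real.sqrt (1.5^2) from (Real.sqrt_sq (by norm_num)).symm]
    exact Real.sqrt_le_sqrt (by norm_num)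
  have hsqrt2ge : 1 ≤ Real.sqrt 2 := by
    rw [show (1:ℝ) = Real.sqrt 1 from Real.sqrt_one.symm]
    exact Real.sqrt_le_sqrt (by norm_num)
  have hinner : ∀ α β, α ≠ β → |⟪y α, y β⟫| ≤ 9 * r * δ := by
    intro α β hab
    have h2' := abs_le.mp (h2 α β hab)
    have hsub : y α - y β = x β - x α := by simp only [hy]; abel
    have hid : ‖y α - y β‖^2 = ‖y α‖^2 - 2*⟪y α, y β⟫ + ‖y β‖^2 :=
      norm_sub_sq_real _ _
    have hns : ‖y α - y β‖ = ‖x α - x β‖ := by rw [hsub, norm_sub_rev]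
    rw [hns] at hid
    have hna := hnorm α
    have hnb := hnorm β
    have hab1 : Real.sqrt 2 * r - δ ≤ ‖x α - x β‖ := by linarith [h2'.1]
    have hab2 : ‖x α - x β‖ ≤ Real.sqrt 2 * r + δ := by linarith [h2'.2]
    have hab0 : (0:ℝ) ≤ Real.sqrt 2 * r - δ := by nlinarith
    have hsq1 : (Real.sqrt 2 * r - δ)^2 ≤ ‖x α - x β‖^2 := by
      apply sq_le_sq' <;> nlinarith [norm_nonneg (x α - x β)]
    have hsq2 : ‖x α - x β‖^2 ≤ (Real.sqrt 2 * r + δ)^2 := by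
      apply sq_le_sq' <;> nlinarith [norm_nonneg (x α - x β)]
    have hya1 : (r - 3*δ)^2 ≤ ‖y α‖^2 := by nlinarith [hna.1, norm_nonneg (y α)]
    have hya2 : ‖y α‖^2 ≤ (r + 3*δ)^2 := by nlinarith [hna.2, norm_nonneg (y α)]
    have hyb1 : (r - 3*δ)^2 ≤ ‖y β‖^2 := by nlinarith [hnb.1, norm_nonneg (y β)]
    have hyb2 : ‖y β‖^2 ≤ (r + 3*δ)^2 := by nlinarith [hnb.2, norm_nonneg (y β)]
    have hdd : 12*δ*δ ≤ r*δ := mul_le_mul_of_nonneg_right hδr hδ.le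
    have hplus : 0 ≤ (1.5 - Real.sqrt 2) * (r*δ) :=
      mul_nonneg (by linarith) (by positivity)
    rw [abs_le]
    constructor
    · nlinarith [hid, hya1, hyb1, hsq2, hsqrt2, hdd, hplus, mul_pos hr hδ]
    · nlinarith [hid, hya2, hyb2, hsq1, hsqrt2, hdd, hplus, mul_pos hr hδ]
  set S : ℝ := ∑ α, v α ^ 2 with hS
  have hS0 : 0 ≤ S := Finset.sum_nonneg fun _ _ => sq_nonneg _
  set T : ℝ := ∑ α, |v α| with hT
  have hT2 : T^2 ≤ (d:ℝ) * S := by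
    have h := sq_sum_le_card_mul_sum_sq (s := (Finset.univ : Finset (Fin d)))
      (f := fun α => |v α|)
    simpa [sq_abs] using h
  -- expansion of the norm squared
  have hexp : ‖∑ α, v α • y α‖^2 = ∑ α, ∑ β, v α * v β * ⟪y α, y β⟫ := by
    rw [← real_inner_self_eq_norm_sq, sum_inner]
    refine Finset.sum_congr rfl fun α _ => ?_
    rw [inner_sum]
    refine Finset.sum_congr rfl fun β _ => ?_
    rw [real_inner_smul_left, real_inner_smul_right]
    ring
  have hlow : ∀ α β : Fin d, -(9*r*δ) * (|v α| * |v β|) +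
      (if α = β then v α ^ 2 * (r - 3*δ)^2 + 9*r*δ * v α ^2 else 0)
      ≤ v α * v β * ⟪y α, y β⟫ := by
    intro α β
    by_cases hab : α = β
    · subst hab
      rw [if_pos rfl]
      have h1' : (r - 3*δ)^2 ≤ ‖y α‖^2 := by
        nlinarith [(hnorm α).1, norm_nonneg (y α)]
      have hinn : ⟪y α, y α⟫ = ‖y α‖^2 := real_inner_self_eq_norm_sq _
      have habs2 : |v α| * |v α| = v α ^ 2 := by rw [← abs_mul, ← sq, abs_sq]
      rw [hinn, habs2]
      nlinarith [mul_le_mul_of_nonneg_left h1' (sq_nonneg (v α))]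
    · simp only [if_neg hab]
      have h := hinner α β hab
      have habs : |v α * v β * ⟪y α, y β⟫| ≤ |v α| * |v β| * (9*r*δ) := by
        rw [abs_mul, abs_mul]
        exact mul_le_mul_of_nonneg_left h (by positivity)
      have := (abs_le.mp habs).1
      nlinarith
  have hmain : (r - 3*δ)^2 * S + 9*r*δ*S - 9*r*δ*T^2 ≤ ‖∑ α, v α • y α‖^2 := by
    rw [hexp]
    have hge : ∑ α, ∑ β, (-(9*r*δ) * (|v α| * |v β|) +
        (if α = β then v α ^ 2 * (r - 3*δ)^2 + 9*r*δ * v α ^2 else 0))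
        ≤ ∑ α, ∑ β, v α * v β * ⟪y α, y β⟫ :=
      Finset.sum_le_sum fun α _ => Finset.sum_le_sum fun β _ => hlow α β
    refine le_trans (le_of_eq ?_) hge
    have key : ∀ α : Fin d, ∑ β, (-(9*r*δ) * (|v α| * |v β|) +
        (if α = β then v α ^ 2 * (r - 3*δ)^2 + 9*r*δ * v α ^2 else 0))
        = -(9*r*δ) * (|v α| * T) + (v α ^ 2 * (r - 3*δ)^2 + 9*r*δ * v α ^2) := by
      intro α
      rw [Finset.sum_add_distrib, Finset.sum_ite_eq, if_pos (Finset.mem_univ α),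
        ← Finset.mul_sum, ← Finset.mul_sum, ← hT]
    rw [Finset.sum_congr rfl fun α _ => key α, Finset.sum_add_distrib]
    have e1 : ∑ α, -(9*r*δ) * (|v α| * T) = -(9*r*δ) * (T * T) := by
      rw [← Finset.mul_sum, ← Finset.sum_mul, ← hT]
    have e2 : ∑ α, (v α ^ 2 * (r - 3*δ)^2 + 9*r*δ * v α ^2)
        = S * (r - 3*δ)^2 + 9*r*δ * S := by
      rw [Finset.sum_add_distrib, ← Finset.sum_mul, ← Finset.mul_sum, ← hS]
    rw [e1, e2]
    ring
  have hfin : (r/2)^2 * S ≤ ‖∑ α, v α • y α‖^2 := by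
    have h9 : 9*r*δ*T^2 ≤ 9*r*δ*((d:ℝ)*S) := by
      apply mul_le_mul_of_nonneg_left hT2; positivity
    have hkey : (r/2)^2 * S ≤ (r - 3*δ)^2 * S + 9*r*δ*S - 9*r*δ*((d:ℝ)*S) := by
      have : (0:ℝ) ≤ ((r - 3*δ)^2 + 9*r*δ - 9*r*δ*(d:ℝ) - (r/2)^2) * S := by
        apply mul_nonneg _ hS0
        nlinarith
      nlinarith
    linarith
  have hgoal : (r/2 * Real.sqrt S)^2 ≤ ‖∑ α, v α • y α‖^2 := by
    have : (r/2 * Real.sqrt S)^2 = (r/2)^2 * S := by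
      rw [mul_pow, Real.sq_sqrt hS0]
    rw [this]; exact hfin
  have h2' : 0 ≤ r/2 * Real.sqrt S := by positivity
  have hfin2 := Real.sqrt_le_sqrt hgoal
  rwa [Real.sqrt_sq h2', Real.sqrt_sq (norm_nonneg _)] at hfin2
end

section
/- Let M be a nonempty compact metric space, let μ be a Borel probability measure on M, let ς ∈ (0, 1/4), let n ≥ 1 be an integer, and let ε > 0. For ρ > 0 set μ_min(ρ) := inf over p ∈ M of μ(B(p,ρ)), where B(p,ρ) is the open ball of radius ρ. Assume μ_min(ε/6) ≥ 2·n^{−ς}. Let X_1, …, X_n be i.i.d. random points of M with law μ. Then the probability that there exists p ∈ M with #{i ∈ {1,…,n} : X_i ∈ B(p, ε)} < μ_min(2ε/3)·n/2 is at most exp(−√n). -/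
open MeasureTheory
open scoped Classical
open ProbabilityTheory
open scoped ENNReal NNReal

private lemma bern_mgf_le (p s : ℝ) (hp0 : 0 ≤ p) (hp1 : p ≤ 1) :
    1 + (Real.exp s - 1) * p ≤ Real.exp (p * s + s ^ 2 / 8) := by
  set u : ℝ → ℝ := fun x => 1 + (Real.exp x - 1) * p with hu_def
  clear_value u
  have hu : ∀ x, 0 < u x := by
    intro x
    rw [hu_def]
    show 0 < 1 + (Real.exp x - 1) * p
    nlinarith [Real.exp_pos x, mul_nonneg hp0 (Real.exp_pos x).le,
      mul_nonneg (sub_nonneg.2 hp1) (Real.exp_pos x).le]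
  have hu' : ∀ x, HasDerivAt u (Real.exp x * p) x := by
    intro x
    rw [hu_def]
    simpa using (((Real.hasDerivAt_exp x).sub_const 1).mul_const p).const_add 1
  set G : ℝ → ℝ := fun x => p + x / 4 - Real.exp x * p / u x with hG_def
  clear_value G
  set g : ℝ → ℝ := fun x => p * x + x ^ 2 / 8 - Real.log (u x) with hg_def
  clear_value g
  have hg' : ∀ x, HasDerivAt g (G x) x := by
    intro x
    have h1 : HasDerivAt (fun x : ℝ => p * x + x ^ 2 / 8) (p * 1 + (2:ℕ) * x ^ (2-1) / 8) x :=
      ((hasDerivAt_id x).const_mul p).add ((hasDerivAt_pow 2 x).div_const 8)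
    have h2 : HasDerivAt (fun x => Real.log (u x)) (Real.exp x * p / u x) x :=
      (hu' x).log (hu x).ne'
    have := h1.sub h2
    convert this using 1
    · rfl
    · rfl
    · rw [hg_def]; rfl
    rw [hG_def]; ring
  have hG' : ∀ x, HasDerivAt G (1 / 4 - Real.exp x * p * (1 - p) / (u x) ^ 2) x := by
    intro x
    have h1 : HasDerivAt (fun x : ℝ => p + x / 4) (1 / 4) x := by
      simpa using ((hasDerivAt_id x).div_const 4).const_add p
    have h2 : HasDerivAt (fun x => Real.exp x * p / u x)
        ((Real.exp x * p * u x - Real.exp x * p * (Real.exp x * p)) / (u x) ^ 2) x :=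
      ((Real.hasDerivAt_exp x).mul_const p).div (hu' x) (hu x).ne'
    have := h1.sub h2
    convert this using 2
    · rfl
    · rfl
    · rw [hG_def]; rfl
    have huxe : u x = 1 + (Real.exp x - 1) * p := by rw [hu_def]
    rw [huxe]; ring
  have hG'nonneg : ∀ x, 0 ≤ 1 / 4 - Real.exp x * p * (1 - p) / (u x) ^ 2 := by
    intro x
    have h1 := hu x
    have h2 : 4 * (Real.exp x * p * (1 - p)) ≤ (u x) ^ 2 := by
      have hs := sq_nonneg ((1 - p) - Real.exp x * p)
      have huxe : u x = 1 + (Real.exp x - 1) * p := by rw [hu_def]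
      rw [huxe]
      nlinarith [hs]
    have h3 : Real.exp x * p * (1 - p) / (u x) ^ 2 ≤ 1 / 4 := by
      rw [div_le_iff₀ (by positivity)]
      linarith [h2]
    linarith
  have hGmono : Monotone G :=
    monotone_of_deriv_nonneg (fun x => (hG' x).differentiableAt)
      (fun x => by rw [(hG' x).deriv]; exact hG'nonneg x)
  have hu0 : u 0 = 1 := by rw [hu_def]; simp
  have hG0 : G 0 = 0 := by rw [hG_def]; simp [hu0]
  have hg0 : g 0 = 0 := by rw [hg_def]; simp [hu0]
  have key : 0 ≤ g s := by
    rcases le_or_gt 0 s with hs | hs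
    · have hmono : MonotoneOn g (Set.Ici 0) := by
        apply monotoneOn_of_deriv_nonneg (convex_Ici 0)
        · exact Continuous.continuousOn (by
            have : Differentiable ℝ g := fun x => (hg' x).differentiableAt
            exact this.continuous)
        · exact fun x _ => ((hg' x).differentiableAt).differentiableWithinAt
        · intro x hx
          rw [(hg' x).deriv]
          have : (0:ℝ) ≤ x := le_of_lt (by simpa using hx)
          calc (0:ℝ) = G 0 := hG0.symm
            _ ≤ G x := hGmono this
      have := hmono (Set.self_mem_Ici) (Set.mem_Ici.2 hs) hs
      rw [hg0] at this; exact this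
    · have hmono : AntitoneOn g (Set.Iic 0) := by
        apply antitoneOn_of_deriv_nonpos (convex_Iic 0)
        · exact Continuous.continuousOn (by
            have : Differentiable ℝ g := fun x => (hg' x).differentiableAt
            exact this.continuous)
        · exact fun x _ => ((hg' x).differentiableAt).differentiableWithinAt
        · intro x hx
          rw [(hg' x).deriv]
          have hx0 : x ≤ (0:ℝ) := le_of_lt (by simpa using hx)
          calc G x ≤ G 0 := hGmono hx0
            _ = 0 := hG0
      have := hmono (Set.mem_Iic.2 hs.le) (Set.self_mem_Iic) hs.le
      rw [hg0] at this; exact this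
  have hlog : Real.log (u s) ≤ p * s + s ^ 2 / 8 := by
    rw [hg_def] at key; simp only [] at key; linarith [key]
  have := (Real.log_le_iff_le_exp (hu s)).mp hlog
  rw [hu_def] at this
  simpa using this

private lemma chernoff_indicator {Ω : Type*} [MeasurableSpace Ω] (P : Measure Ω) [IsProbabilityMeasure P]
    {n : ℕ} (E : Fin n → Set Ω) (hE : ∀ i, MeasurableSet (E i))
    (hindep : iIndepFun
      (fun i ω => if ω ∈ E i then (1:ℝ) else 0) P)
    (m : ℝ) (hm : 0 ≤ m) (hPm : ∀ i, m ≤ (P (E i)).toReal) :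
    (P {ω | (∑ i, if ω ∈ E i then (1:ℝ) else 0) ≤ m * n / 2}).toReal ≤
      Real.exp (-(m ^ 2 * n / 2)) := by
  set Y : Fin n → Ω → ℝ := fun i ω => if ω ∈ E i then (1:ℝ) else 0 with hY_def
  clear_value Y
  have hYmeas : ∀ i, Measurable (Y i) := by
    intro i
    rw [hY_def]
    exact Measurable.ite (hE i) measurable_const measurable_const
  set t : ℝ := -(2 * m) with ht_def
  clear_value t
  have ht : t ≤ 0 := by simp [ht_def]; positivity
  have hexp_eq : ∀ i, (fun ω => Real.exp (t * Y i ω)) =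
      fun ω => 1 + (Real.exp t - 1) * Y i ω := by
    intro i; funext ω
    by_cases h : ω ∈ E i <;> simp [hY_def, h]
  have hYint : ∀ i, Integrable (Y i) P := by
    intro i
    have : Y i = (E i).indicator (fun _ => (1:ℝ)) := by
      funext ω; by_cases h : ω ∈ E i <;> simp [hY_def, h]
    rw [this]
    exact (integrable_const (1:ℝ)).indicator (hE i)
  have hYintegral : ∀ i, ∫ ω, Y i ω ∂P = (P (E i)).toReal := by
    intro i
    have : Y i = (E i).indicator (fun _ => (1:ℝ)) := by
      funext ω; by_cases h : ω ∈ E i <;> simp [hY_def, h]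
    rw [this, integral_indicator_const (1:ℝ) (hE i)]
    simp [measureReal_def]
  have hint : ∀ i, Integrable (fun ω => Real.exp (t * Y i ω)) P := by
    intro i
    rw [hexp_eq i]
    exact (integrable_const (1:ℝ)).add ((hYint i).const_mul _)
  have hmgf : ∀ i, mgf (Y i) P t = 1 + (Real.exp t - 1) * (P (E i)).toReal := by
    intro i
    rw [mgf, hexp_eq i, integral_add (integrable_const _) ((hYint i).const_mul _),
      integral_const_mul, hYintegral i]
    simp
  -- integrability of exp (t * S)
  have hSmeas : Measurable (fun ω => ∑ i, Y i ω) := by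
    apply Finset.measurable_sum
    exact fun i _ => hYmeas i
  have hSnonneg : ∀ ω, 0 ≤ ∑ i, Y i ω := by
    intro ω
    apply Finset.sum_nonneg
    intro i _
    by_cases h : ω ∈ E i <;> simp [hY_def, h]
  have hintS : Integrable (fun ω => Real.exp (t * (∑ i, Y i) ω)) P := by
    apply Integrable.mono' (integrable_const (1:ℝ))
    · exact ((Real.measurable_exp.comp ((hSmeas.const_mul t))).aestronglyMeasurable).congr
        (by filter_upwards with ω; simp [Finset.sum_apply, mul_comm])
    · filter_upwards with ω
      rw [Real.norm_eq_abs, abs_of_pos (Real.exp_pos _), Real.exp_le_one_iff]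
      have := hSnonneg ω
      simp only [Finset.sum_apply] at *
      nlinarith [hSnonneg ω]
  have hcher := measure_le_le_exp_mul_mgf (X := ∑ i, Y i) (μ := P) (m * n / 2) ht hintS
  have hset : {ω | (∑ i, Y i) ω ≤ m * n / 2} = {ω | (∑ i, if ω ∈ E i then (1:ℝ) else 0) ≤ m * n / 2} := by
    ext ω; simp [Finset.sum_apply, hY_def]
  rw [hset] at hcher
  refine hcher.trans ?_
  -- bound mgf of sum
  have hmgf_sum : mgf (∑ i, Y i) P t = ∏ i, mgf (Y i) P t :=
    hindep.mgf_sum hYmeas Finset.univ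
  have hfac : ∀ i, mgf (Y i) P t ≤ Real.exp (m * t + t ^ 2 / 8) := by
    intro i
    rw [hmgf i]
    have hp0 : 0 ≤ (P (E i)).toReal := ENNReal.toReal_nonneg
    have hp1 : (P (E i)).toReal ≤ 1 := by
      apply ENNReal.toReal_le_of_le_ofReal one_pos.le
      simpa using prob_le_one
    refine (bern_mgf_le _ t hp0 hp1).trans ?_
    apply Real.exp_le_exp.2
    have : (P (E i)).toReal * t ≤ m * t := by
      rw [ht_def]
      nlinarith [hPm i, hp0]
    linarith
  have hprod : ∏ i : Fin n, mgf (Y i) P t ≤ Real.exp ((n : ℝ) * (m * t + t ^ 2 / 8)) := by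
    calc ∏ i : Fin n, mgf (Y i) P t ≤ ∏ _i : Fin n, Real.exp (m * t + t ^ 2 / 8) :=
          Finset.prod_le_prod (fun i _ => mgf_nonneg) (fun i _ => hfac i)
      _ = Real.exp ((n : ℝ) * (m * t + t ^ 2 / 8)) := by
          rw [Finset.prod_const]
          rw [← Real.exp_nat_mul]
          simp
  calc Real.exp (-t * (m * ↑n / 2)) * mgf (∑ i, Y i) P t
      ≤ Real.exp (-t * (m * n / 2)) * Real.exp ((n : ℝ) * (m * t + t ^ 2 / 8)) := by
        apply mul_le_mul_of_nonneg_left _ (Real.exp_pos _).le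
        rw [hmgf_sum]; exact hprod
    _ = Real.exp (-t * (m * n / 2) + (n : ℝ) * (m * t + t ^ 2 / 8)) := (Real.exp_add _ _).symm
    _ ≤ Real.exp (-(m ^ 2 * n / 2)) := by
        apply Real.exp_le_exp.2
        rw [ht_def]
        ring_nf
        nlinarith [sq_nonneg m, Nat.cast_nonneg (α := ℝ) n]

/-- net event for i.i.d. samples. If `μ_min(ε/6) ≥ 2·n^{−ς}`, then the
probability that some ball `B(p,ε)` contains fewer than `μ_min(2ε/3)·n/2` of the i.i.d.
points `X_1, …, X_n` is at most `exp(−√n)`. -/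
theorem net_event_probability_bound {M : Type*} [MetricSpace M] [CompactSpace M]
    [Nonempty M] [MeasurableSpace M] [BorelSpace M]
    (μ : Measure M) [IsProbabilityMeasure μ]
    (ς : ℝ) (hς0 : 0 < ς) (hς1 : ς < 1 / 4)
    (n : ℕ) (hn : 1 ≤ n) (ε : ℝ) (hε : 0 < ε)
    (hmin : ENNReal.ofReal (2 * (n : ℝ) ^ (-ς)) ≤ ⨅ p : M, μ (Metric.ball p (ε / 6)))
    {Ω : Type*} [MeasurableSpace Ω] (P : Measure Ω) [IsProbabilityMeasure P]
    (X : Fin n → Ω → M) (hXmeas : ∀ i, Measurable (X i))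
    (hindep : ProbabilityTheory.iIndepFun X P)
    (hlaw : ∀ i, P.map (X i) = μ) :
    P {ω | ∃ p : M,
        (((Finset.univ.filter fun i => X i ω ∈ Metric.ball p ε).card : ℝ) <
          (⨅ q : M, μ (Metric.ball q (2 * ε / 3))).toReal * n / 2)} ≤
      ENNReal.ofReal (Real.exp (-Real.sqrt n)) := by
  have hn' : (0:ℝ) < n := by exact_mod_cast Nat.pos_of_ne_zero (by omega)
  have hn1 : (1:ℝ) ≤ n := by exact_mod_cast hn
  set c₀ : ℝ := 2 * (n : ℝ) ^ (-ς) with hc₀_def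
  have hc₀pos : 0 < c₀ := by
    have := Real.rpow_pos_of_pos hn' (-ς)
    positivity
  have hball : ∀ q : M, ENNReal.ofReal c₀ ≤ μ (Metric.ball q (ε / 6)) := fun q =>
    hmin.trans (iInf_le _ q)
  set m : ℝ := (⨅ q : M, μ (Metric.ball q (2 * ε / 3))).toReal with hm_def
  have hminf_le_one : (⨅ q : M, μ (Metric.ball q (2 * ε / 3))) ≤ 1 := by
    obtain ⟨q₀⟩ := ‹Nonempty M›
    exact (iInf_le _ q₀).trans prob_le_one
  have hminf_ne_top : (⨅ q : M, μ (Metric.ball q (2 * ε / 3))) ≠ ⊤ :=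
    (hminf_le_one.trans_lt ENNReal.one_lt_top).ne
  have hc₀m : ENNReal.ofReal c₀ ≤ ⨅ q : M, μ (Metric.ball q (2 * ε / 3)) := by
    refine le_iInf fun q => (hball q).trans (measure_mono (Metric.ball_subset_ball (by linarith)))
  have hmc₀ : c₀ ≤ m := by
    rw [hm_def]
    exact (ENNReal.ofReal_le_iff_le_toReal hminf_ne_top).mp hc₀m
  have hmpos : 0 < m := hc₀pos.trans_le hmc₀
  -- net construction
  set Sep : Finset M → Prop := fun s => ∀ x ∈ s, ∀ y ∈ s, x ≠ y → ε / 3 ≤ dist x y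
    with hSep_def
  have hcard_bound : ∀ s : Finset M, Sep s → (s.card : ℝ) * c₀ ≤ 1 := by
    intro s hs
    have hdisj : (s : Set M).PairwiseDisjoint (fun x => Metric.ball x (ε / 6)) := by
      intro x hx y hy hxy
      exact Metric.ball_disjoint_ball (by linarith [hs x hx y hy hxy])
    have hsum : ∑ x ∈ s, μ (Metric.ball x (ε / 6)) = μ (⋃ x ∈ s, Metric.ball x (ε / 6)) :=
      (measure_biUnion_finset hdisj fun x _ => Metric.isOpen_ball.measurableSet).symm
    have h1 : (s.card : ℝ≥0∞) * ENNReal.ofReal c₀ ≤ 1 := by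
      calc (s.card : ℝ≥0∞) * ENNReal.ofReal c₀ = s.card • ENNReal.ofReal c₀ := by
            rw [nsmul_eq_mul]
        _ ≤ ∑ x ∈ s, μ (Metric.ball x (ε / 6)) :=
            Finset.card_nsmul_le_sum s _ _ fun x _ => hball x
        _ = μ (⋃ x ∈ s, Metric.ball x (ε / 6)) := hsum
        _ ≤ 1 := prob_le_one
    have h2 : ENNReal.ofReal ((s.card : ℝ) * c₀) ≤ ENNReal.ofReal 1 := by
      rw [ENNReal.ofReal_mul (by positivity), ENNReal.ofReal_natCast, ENNReal.ofReal_one]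
      exact h1
    have := (ENNReal.ofReal_le_ofReal_iff (by norm_num)).mp h2
    exact this
  have hcard_nat : ∀ s : Finset M, Sep s → s.card ≤ ⌊(n:ℝ) ^ ς / 2⌋₊ := by
    intro s hs
    apply Nat.le_floor
    have h1 := hcard_bound s hs
    have h2 : c₀ = 2 / (n:ℝ) ^ ς := by
      rw [hc₀_def, Real.rpow_neg hn'.le]
      field_simp
    have hpow : (0:ℝ) < (n:ℝ) ^ ς := Real.rpow_pos_of_pos hn' ς
    rw [h2, mul_div_assoc', div_le_one hpow] at h1
    linarith [h1]
  set Pk : ℕ → Prop := fun k => ∃ s : Finset M, Sep s ∧ s.card = k with hPk_def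
  have hP0 : Pk 0 := ⟨∅, by simp [hSep_def], rfl⟩
  set K := ⌊(n:ℝ) ^ ς / 2⌋₊ with hK_def
  set k₀ := Nat.findGreatest Pk K with hk₀_def
  have hk₀spec : Pk k₀ := Nat.findGreatest_spec (Nat.zero_le K) hP0
  obtain ⟨net, hnet_sep, hnet_card⟩ := hk₀spec
  have hcover : ∀ p : M, ∃ q ∈ net, dist p q < ε / 3 := by
    intro p
    by_contra hcon
    push_neg at hcon
    have hpnot : p ∉ net := by
      intro hp
      have := hcon p hp
      simp at this
      linarith
    have hsep' : Sep (insert p net) := by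
      intro x hx y hy hxy
      rcases Finset.mem_insert.mp hx with hxp | hx' <;>
        rcases Finset.mem_insert.mp hy with hyp | hy'
      · exact absurd (hxp.trans hyp.symm) hxy
      · subst hxp; exact hcon y hy'
      · subst hyp; rw [dist_comm]; exact hcon x hx'
      · exact hnet_sep x hx' y hy' hxy
    have hcard' : (insert p net).card = k₀ + 1 := by
      rw [Finset.card_insert_of_notMem hpnot, hnet_card]
    have hle : k₀ + 1 ≤ K := hcard' ▸ hcard_nat _ hsep'
    have : k₀ + 1 ≤ k₀ := Nat.le_findGreatest hle ⟨insert p net, hsep', hcard'⟩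
    omega
  -- per-center events
  set A : M → Set Ω := fun q => {ω | (∑ i, if ω ∈ X i ⁻¹' (Metric.ball q (2 * ε / 3))
      then (1:ℝ) else 0) ≤ m * n / 2} with hA_def
  have hsubset : {ω | ∃ p : M,
        (((Finset.univ.filter fun i => X i ω ∈ Metric.ball p ε).card : ℝ) <
          m * n / 2)} ⊆ ⋃ q ∈ net, A q := by
    intro ω hω
    obtain ⟨p, hp⟩ := hω
    obtain ⟨q, hq, hdist⟩ := hcover p
    refine Set.mem_biUnion hq ?_
    rw [hA_def]
    simp only [Set.mem_setOf_eq]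
    have hball_sub : Metric.ball q (2 * ε / 3) ⊆ Metric.ball p ε := by
      apply Metric.ball_subset_ball'
      rw [dist_comm]
      linarith
    have hsum_eq : (∑ i, if ω ∈ X i ⁻¹' (Metric.ball q (2 * ε / 3)) then (1:ℝ) else 0) =
        ((Finset.univ.filter fun i => X i ω ∈ Metric.ball q (2 * ε / 3)).card : ℝ) := by
      rw [Finset.sum_boole]
      norm_num [Set.mem_preimage]
    have hcard_le : (Finset.univ.filter fun i => X i ω ∈ Metric.ball q (2 * ε / 3)).card ≤
        (Finset.univ.filter fun i => X i ω ∈ Metric.ball p ε).card := by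
      apply Finset.card_le_card
      intro i hi
      rw [Finset.mem_filter] at *
      exact ⟨hi.1, hball_sub hi.2⟩
    rw [hsum_eq]
    calc ((Finset.univ.filter fun i => X i ω ∈ Metric.ball q (2 * ε / 3)).card : ℝ)
        ≤ ((Finset.univ.filter fun i => X i ω ∈ Metric.ball p ε).card : ℝ) := by
          exact_mod_cast hcard_le
      _ ≤ m * n / 2 := hp.le
  -- Chernoff per center
  have hA_bound : ∀ q : M, P (A q) ≤ ENNReal.ofReal (Real.exp (-(m ^ 2 * n / 2))) := by
    intro q
    set E : Fin n → Set Ω := fun i => X i ⁻¹' (Metric.ball q (2 * ε / 3)) with hE_def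
    have hE : ∀ i, MeasurableSet (E i) := fun i => (hXmeas i) measurableSet_ball
    have hindep' : iIndepFun
        (fun i ω => if ω ∈ E i then (1:ℝ) else 0) P := by
      have := hindep.comp (fun i (x : M) => if x ∈ Metric.ball q (2 * ε / 3) then (1:ℝ) else 0)
        (fun i => Measurable.ite measurableSet_ball measurable_const measurable_const)
      exact this
    have hPm : ∀ i, m ≤ (P (E i)).toReal := by
      intro i
      have hmeq : P (E i) = μ (Metric.ball q (2 * ε / 3)) := by
        rw [hE_def, ← hlaw i, Measure.map_apply (hXmeas i) measurableSet_ball]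
      rw [hmeq, hm_def]
      exact ENNReal.toReal_mono (measure_ne_top μ _) (iInf_le _ q)
    have hch := chernoff_indicator P E hE hindep' m hmpos.le hPm
    have hA_eq : A q = {ω | (∑ i, if ω ∈ E i then (1:ℝ) else 0) ≤ m * n / 2} := rfl
    rw [hA_eq]
    rw [← ENNReal.ofReal_toReal (measure_ne_top P _)]
    exact ENNReal.ofReal_le_ofReal hch
  -- sum up
  have hfinal : P {ω | ∃ p : M,
        (((Finset.univ.filter fun i => X i ω ∈ Metric.ball p ε).card : ℝ) <
          m * n / 2)} ≤
      (k₀ : ℝ≥0∞) * ENNReal.ofReal (Real.exp (-(m ^ 2 * n / 2))) := by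
    calc P {ω | ∃ p : M,
          (((Finset.univ.filter fun i => X i ω ∈ Metric.ball p ε).card : ℝ) <
            m * n / 2)} ≤ P (⋃ q ∈ net, A q) := measure_mono hsubset
      _ ≤ ∑ q ∈ net, P (A q) := measure_biUnion_finset_le _ _
      _ ≤ ∑ _q ∈ net, ENNReal.ofReal (Real.exp (-(m ^ 2 * n / 2))) :=
          Finset.sum_le_sum fun q _ => hA_bound q
      _ = (k₀ : ℝ≥0∞) * ENNReal.ofReal (Real.exp (-(m ^ 2 * n / 2))) := by
          rw [Finset.sum_const, hnet_card, nsmul_eq_mul]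
  refine hfinal.trans ?_
  -- final numeric inequality
  have hsqrt : Real.sqrt n = (n:ℝ) ^ (1/2 : ℝ) := Real.sqrt_eq_rpow _
  have hexp_bound : m ^ 2 * n / 2 ≥ 2 * Real.sqrt n := by
    have h1 : m ^ 2 ≥ 4 * ((n:ℝ) ^ (-ς)) ^ 2 := by nlinarith [hmc₀, hc₀pos]
    have h2 : ((n:ℝ) ^ (-ς)) ^ 2 * n = (n:ℝ) ^ (1 - 2 * ς) := by
      have e1 : ((n:ℝ) ^ (-ς)) ^ 2 = (n:ℝ) ^ (-ς * 2) := by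
        rw [← Real.rpow_natCast ((n:ℝ) ^ (-ς)) 2, ← Real.rpow_mul hn'.le]
        norm_num
      have e2 : (n:ℝ) ^ (-ς * 2) * (n:ℝ) ^ (1:ℝ) = (n:ℝ) ^ (1 - 2 * ς) := by
        rw [← Real.rpow_add hn']; ring_nf
      rw [e1, ← e2, Real.rpow_one]
    have h3 : (n:ℝ) ^ (1 - 2 * ς) ≥ (n:ℝ) ^ (1/2 : ℝ) :=
      Real.rpow_le_rpow_of_exponent_le hn1 (by linarith)
    rw [hsqrt]
    nlinarith [mul_le_mul_of_nonneg_right h1.le hn'.le, h2, h3]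
  have hsqrt_pos : 0 < Real.sqrt n := Real.sqrt_pos.mpr hn'
  have hk₀_real : (k₀ : ℝ) ≤ Real.exp (Real.sqrt n) := by
    have hk₀K : k₀ ≤ K := Nat.findGreatest_le K
    have h1 : (k₀ : ℝ) ≤ (n:ℝ) ^ ς / 2 :=
      le_trans (by exact_mod_cast hk₀K) (Nat.floor_le (by positivity))
    have h2 : (n:ℝ) ^ ς ≤ (n:ℝ) ^ (1/4 : ℝ) :=
      Real.rpow_le_rpow_of_exponent_le hn1 hς1.le
    have h3 : (n:ℝ) ^ (1/4 : ℝ) ≤ Real.exp (Real.sqrt n) := by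
      rw [Real.rpow_def_of_pos hn']
      apply Real.exp_le_exp.2
      have hlog : Real.log n ≤ 2 * Real.sqrt n := by
        have := Real.log_le_sub_one_of_pos hsqrt_pos
        have hls := Real.log_sqrt hn'.le
        linarith
      nlinarith [hsqrt_pos]
    linarith
  calc (k₀ : ℝ≥0∞) * ENNReal.ofReal (Real.exp (-(m ^ 2 * ↑n / 2)))
      = ENNReal.ofReal ((k₀ : ℝ) * Real.exp (-(m ^ 2 * ↑n / 2))) := by
        rw [ENNReal.ofReal_mul (by positivity), ENNReal.ofReal_natCast]
    _ ≤ ENNReal.ofReal (Real.exp (-Real.sqrt n)) := by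
        apply ENNReal.ofReal_le_ofReal
        calc (k₀ : ℝ) * Real.exp (-(m ^ 2 * ↑n / 2))
            ≤ Real.exp (Real.sqrt n) * Real.exp (-(2 * Real.sqrt n)) := by
              apply mul_le_mul hk₀_real (Real.exp_le_exp.2 (by linarith)) (Real.exp_pos _).le
                (Real.exp_pos _).le
          _ = Real.exp (-Real.sqrt n) := by
              rw [← Real.exp_add]; ring_nf
end
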